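/- arXiv:2501.08067 — 3 statements merged into one kernel-verified Lean document; each statement's English description precedes it below -/
import Mathlib

section
/- Under unconfoundedness in the source domain ((Y(1),Y(0)) ⟂ A | X, G=1), overlap (0 < P(A=1|X,G=1) < 1), and transportability ((Y(1),Y(0)) ⟂ G | X with 0 < P(G=1|X) < 1), the conditional average treatment effect in the target domain τ(X) = E[Y(1) − Y(0) | X, G=0] equals μ₁(X) − μ₀(X), where μₐ(X) = E[Y | X, A=a, G=1] and Y = AY(1) + (1−A)Y(0). -/
/-!
Write `E[·|X]` for the conditional expectation given `σ(X)`. In each arm, unconfoundedness,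
consistency and the propensity give `e(X) E[G Yₐ|X] = E[G A Yₐ|X] = μₐ(X) E[G A|X] =
μₐ(X) e(X) E[G|X]`, hence `E[G (Y(1) - Y(0))|X] = (μ₁ - μ₀)(X) s(X)`. Transportability says
`E[G (Y(1) - Y(0))|X] = s(X) E[Y(1) - Y(0)|X]`, so `E[Y(1) - Y(0)|X] = (μ₁ - μ₀)(X)` because
`s > 0`; on the target side `(1 - s(X)) E[Y(1) - Y(0)|X] = E[(1 - G)(Y(1) - Y(0))|X] =
(1 - s(X)) τ(X)`, and `s < 1`.

The independence hypotheses only test bounded functions of `(Y(1), Y(0))`; they reach `Y(1)` and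
`Y(0)` by truncation and dominated convergence. Since `μₐ(X)` and `τ(X)` need not be integrable,
the argument runs on each event `{|τ(X)|, |μ₁(X)|, |μ₀(X)| ≤ n}`, and these exhaust `Ω`.
-/

open MeasureTheory Filter Topology
open ProbabilityTheory (truncation truncation_eq_self abs_truncation_le_abs_self
  abs_truncation_le_bound)

theorem abs_le_one_of_mem_Icc {a : ℝ} (h : a ∈ Set.Icc 0 1) : |a| ≤ 1 :=
  abs_le.2 ⟨by linarith [h.1], h.2⟩

theorem abs_one_sub_le_one_of_mem_Icc {a : ℝ} (h : a ∈ Set.Icc 0 1) : |1 - a| ≤ 1 :=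
  abs_le.2 ⟨by linarith [h.2], by linarith [h.1]⟩

theorem abs_mul_le_one {a b : ℝ} (ha : |a| ≤ 1) (hb : |b| ≤ 1) : |a * b| ≤ 1 := by
  rw [abs_mul]
  exact mul_le_one₀ ha (abs_nonneg b) hb

theorem ae_of_forall_ae_restrict_preimage_setOf_le {Ω α : Type*} [MeasurableSpace Ω]
    {μ : Measure Ω} {p : Ω → Prop} (X : Ω → α) (b : α → ℝ)
    (h : ∀ n : ℕ, ∀ᵐ ω ∂μ.restrict (X ⁻¹' {x | b x ≤ n}), p ω) : ∀ᵐ ω ∂μ, p ω := by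
  have hcover : ⋃ n : ℕ, X ⁻¹' {x | b x ≤ n} = Set.univ :=
    Set.iUnion_eq_univ_iff.2 fun ω => exists_nat_ge (b (X ω))
  rwa [← Measure.restrict_univ (μ := μ), ← hcover, ae_restrict_iUnion_iff]

section

variable {Ω 𝓧 : Type*} [MeasurableSpace Ω] [mX : MeasurableSpace 𝓧] {μ : Measure Ω} {X : Ω → 𝓧}

/-- `E[u|X] = E[v|X]` in set-integral form. Without integrability of `u` and `v` the integrals
may be junk values, so the identity only has content for integrable functions. -/
def CondMeanEq (X : Ω → 𝓧) (μ : Measure Ω) (u v : Ω → ℝ) : Prop :=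
  ∀ B : Set 𝓧, MeasurableSet B → ∫ ω in X ⁻¹' B, u ω ∂μ = ∫ ω in X ⁻¹' B, v ω ∂μ

namespace CondMeanEq

variable {u v u' v' : Ω → ℝ}

theorem refl (u : Ω → ℝ) : CondMeanEq X μ u u := fun _ _ => rfl

theorem congr (h : CondMeanEq X μ u v) (hu : ∀ ω, u ω = u' ω) (hv : ∀ ω, v ω = v' ω) :
    CondMeanEq X μ u' v' := by
  rwa [funext hu, funext hv] at h

theorem sub (h : CondMeanEq X μ u v) (h' : CondMeanEq X μ u' v') (hu : Integrable u μ)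
    (hv : Integrable v μ) (hu' : Integrable u' μ) (hv' : Integrable v' μ) :
    CondMeanEq X μ (fun ω => u ω - u' ω) (fun ω => v ω - v' ω) := fun B hB => by
  rw [integral_sub hu.integrableOn hu'.integrableOn, integral_sub hv.integrableOn hv'.integrableOn,
    h B hB, h' B hB]

theorem restrict (h : CondMeanEq X μ u v) (hX : Measurable X) {T : Set 𝓧} (hT : MeasurableSet T) :
    CondMeanEq X (μ.restrict (X ⁻¹' T)) u v := fun B hB => by
  simp only [Measure.restrict_restrict (hX hB), ← Set.preimage_inter]
  exact h _ (hB.inter hT)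

theorem condExp_ae_eq [IsFiniteMeasure μ] (h : CondMeanEq X μ u v) (hX : Measurable X)
    (hu : Integrable u μ) (hv : Integrable v μ) :
    μ[u | mX.comap X] =ᵐ[μ] μ[v | mX.comap X] := by
  refine ae_eq_condExp_of_forall_setIntegral_eq hX.comap_le hv
    (fun _ _ _ => integrable_condExp.integrableOn) ?_
    stronglyMeasurable_condExp.aestronglyMeasurable
  rintro _ ⟨B, hB, rfl⟩ _
  rw [setIntegral_condExp hX.comap_le hu ⟨B, hB, rfl⟩, h B hB]

end CondMeanEq

theorem tendsto_integral_mul_truncation {ρ Z : Ω → ℝ} (hρ : AEStronglyMeasurable ρ μ) {C : ℝ}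
    (hρC : ∀ ω, |ρ ω| ≤ C) (hZ : Integrable Z μ) :
    Tendsto (fun n : ℕ => ∫ ω, ρ ω * truncation Z n ω ∂μ) atTop (𝓝 (∫ ω, ρ ω * Z ω ∂μ)) := by
  refine tendsto_integral_of_dominated_convergence (fun ω => C * |Z ω|)
    (fun n => hρ.mul hZ.1.truncation) (hZ.abs.const_mul C) (fun n => ae_of_all _ fun ω => ?_)
    (ae_of_all _ fun ω => ?_)
  · rw [Real.norm_eq_abs, abs_mul]
    exact mul_le_mul (hρC ω) (abs_truncation_le_abs_self _ _ _) (abs_nonneg _)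
      ((abs_nonneg _).trans (hρC ω))
  · obtain ⟨N, hN⟩ := exists_nat_gt |Z ω|
    refine tendsto_const_nhds.congr' ?_
    filter_upwards [eventually_ge_atTop N] with n hn
    rw [truncation_eq_self (hN.trans_le (Nat.cast_le.2 hn))]

theorem CondMeanEq.of_forall_bounded {β : Type*} [MeasurableSpace β] {W : Ω → β}
    {ρ σ : Ω → ℝ} (hρ : AEStronglyMeasurable ρ μ) (hσ : AEStronglyMeasurable σ μ) {C : ℝ}
    (hρC : ∀ ω, |ρ ω| ≤ C) (hσC : ∀ ω, |σ ω| ≤ C)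
    (h : ∀ f : β → ℝ, Measurable f → (∃ C, ∀ p, |f p| ≤ C) →
      CondMeanEq X μ (fun ω => ρ ω * f (W ω)) (fun ω => σ ω * f (W ω)))
    {φ : β → ℝ} (hφ : Measurable φ) (hφW : Integrable (fun ω => φ (W ω)) μ) :
    CondMeanEq X μ (fun ω => ρ ω * φ (W ω)) (fun ω => σ ω * φ (W ω)) := fun B hB =>
  tendsto_nhds_unique
    ((tendsto_integral_mul_truncation hρ.restrict hρC hφW.restrict).congr fun n : ℕ =>
      h (truncation φ n) ((measurable_id.indicator measurableSet_Ioc).comp hφ)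
        ⟨_, abs_truncation_le_bound φ n⟩ B hB)
    (tendsto_integral_mul_truncation hσ.restrict hσC hφW.restrict)

theorem condExp_ae_eq_comp_mul {g : 𝓧 → ℝ} (hg : Measurable g) {u v : Ω → ℝ}
    (huv : ∀ ω, v ω = g (X ω) * u ω) (hv : Integrable v μ) (hu : Integrable u μ) :
    μ[v | mX.comap X] =ᵐ[μ] fun ω => g (X ω) * μ[u | mX.comap X] ω := by
  obtain rfl : v = fun ω => g (X ω) * u ω := funext huv
  exact condExp_mul_of_stronglyMeasurable_left
    (hg.comp (comap_measurable X)).stronglyMeasurable hv hu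

theorem condExp_comp [IsFiniteMeasure μ] (hX : Measurable X) {g : 𝓧 → ℝ} (hg : Measurable g)
    (hgX : Integrable (fun ω => g (X ω)) μ) :
    μ[fun ω => g (X ω) | mX.comap X] = fun ω => g (X ω) :=
  condExp_of_stronglyMeasurable hX.comap_le (hg.comp (comap_measurable X)).stronglyMeasurable hgX

theorem condExp_mul_ae_eq_regression_mul [IsFiniteMeasure μ] (hX : Measurable X)
    {G A Ya : Ω → ℝ} {e r : 𝓧 → ℝ} (hG : Measurable G) (hA : Measurable A) (he : Measurable e)
    (hr : Measurable r) (hGb : ∀ ω, |G ω| ≤ 1) (hAb : ∀ ω, |A ω| ≤ 1) (heb : ∀ x, |e x| ≤ 1)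
    (he0 : ∀ x, e x ≠ 0) (hYa : Integrable Ya μ) (hrX : Integrable (fun ω => r (X ω)) μ)
    (hprop : CondMeanEq X μ (fun ω => G ω * A ω) (fun ω => G ω * e (X ω)))
    (hreg : CondMeanEq X μ (fun ω => G ω * A ω * Ya ω) (fun ω => G ω * A ω * r (X ω)))
    (hunconf : CondMeanEq X μ (fun ω => G ω * A ω * Ya ω) (fun ω => G ω * e (X ω) * Ya ω)) :
    μ[fun ω => G ω * Ya ω | mX.comap X] =ᵐ[μ] fun ω => r (X ω) * μ[G | mX.comap X] ω := by
  have heX : Measurable fun ω => e (X ω) := he.comp hX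
  have hGAb : ∀ ω, |G ω * A ω| ≤ 1 := fun ω => abs_mul_le_one (hGb ω) (hAb ω)
  have hGeb : ∀ ω, |G ω * e (X ω)| ≤ 1 := fun ω => abs_mul_le_one (hGb ω) (heb (X ω))
  have iG : Integrable G μ := .of_bound hG.aestronglyMeasurable 1 (ae_of_all _ hGb)
  have iGA : Integrable (fun ω => G ω * A ω) μ :=
    .of_bound (hG.mul hA).aestronglyMeasurable 1 (ae_of_all _ hGAb)
  have iGe : Integrable (fun ω => G ω * e (X ω)) μ :=
    .of_bound (hG.mul heX).aestronglyMeasurable 1 (ae_of_all _ hGeb)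
  have iGYa : Integrable (fun ω => G ω * Ya ω) μ :=
    hYa.bdd_mul hG.aestronglyMeasurable (ae_of_all _ hGb)
  have iGAYa : Integrable (fun ω => G ω * A ω * Ya ω) μ :=
    hYa.bdd_mul (hG.mul hA).aestronglyMeasurable (ae_of_all _ hGAb)
  have iGeYa : Integrable (fun ω => G ω * e (X ω) * Ya ω) μ :=
    hYa.bdd_mul (hG.mul heX).aestronglyMeasurable (ae_of_all _ hGeb)
  have iGAr : Integrable (fun ω => G ω * A ω * r (X ω)) μ :=
    hrX.bdd_mul (hG.mul hA).aestronglyMeasurable (ae_of_all _ hGAb)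
  have hweighted : (fun ω => e (X ω) * μ[fun ω => G ω * Ya ω | mX.comap X] ω)
      =ᵐ[μ] fun ω => r (X ω) * μ[fun ω => G ω * A ω | mX.comap X] ω :=
    calc (fun ω => e (X ω) * μ[fun ω => G ω * Ya ω | mX.comap X] ω)
        =ᵐ[μ] μ[fun ω => G ω * e (X ω) * Ya ω | mX.comap X] :=
          (condExp_ae_eq_comp_mul he (fun ω => by ring) iGeYa iGYa).symm
      _ =ᵐ[μ] μ[fun ω => G ω * A ω * r (X ω) | mX.comap X] :=
          (hunconf.condExp_ae_eq hX iGAYa iGeYa).symm.trans (hreg.condExp_ae_eq hX iGAYa iGAr)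
      _ =ᵐ[μ] _ := condExp_ae_eq_comp_mul hr (fun ω => by ring) iGAr iGA
  have hpropensity : μ[fun ω => G ω * A ω | mX.comap X]
      =ᵐ[μ] fun ω => e (X ω) * μ[G | mX.comap X] ω :=
    (hprop.condExp_ae_eq hX iGA iGe).trans (condExp_ae_eq_comp_mul he (fun ω => by ring) iGe iG)
  filter_upwards [hweighted, hpropensity] with ω h₁ h₂
  apply mul_left_cancel₀ (he0 (X ω))
  rw [h₁, h₂]
  ring

theorem condExp_mul_sub_ae_eq_regression_sub_mul [IsFiniteMeasure μ] (hX : Measurable X)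
    {G A Y1 Y0 : Ω → ℝ} {e1 μ1 μ0 : 𝓧 → ℝ} (hG : Measurable G) (hA : Measurable A)
    (he1 : Measurable e1) (hμ1 : Measurable μ1) (hμ0 : Measurable μ0)
    (hG01 : ∀ ω, G ω ∈ Set.Icc 0 1) (hA01 : ∀ ω, A ω ∈ Set.Icc 0 1)
    (he1_mem : ∀ x, e1 x ∈ Set.Ioo 0 1) (hY1 : Integrable Y1 μ) (hY0 : Integrable Y0 μ)
    (hμ1X : Integrable (fun ω => μ1 (X ω)) μ) (hμ0X : Integrable (fun ω => μ0 (X ω)) μ)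
    (hprop : CondMeanEq X μ (fun ω => G ω * A ω) (fun ω => G ω * e1 (X ω)))
    (hreg1 : CondMeanEq X μ (fun ω => G ω * A ω * Y1 ω) (fun ω => G ω * A ω * μ1 (X ω)))
    (hreg0 : CondMeanEq X μ (fun ω => G ω * (1 - A ω) * Y0 ω)
      (fun ω => G ω * (1 - A ω) * μ0 (X ω)))
    (hunc1 : CondMeanEq X μ (fun ω => G ω * A ω * Y1 ω) (fun ω => G ω * e1 (X ω) * Y1 ω))
    (hunc0 : CondMeanEq X μ (fun ω => G ω * A ω * Y0 ω) (fun ω => G ω * e1 (X ω) * Y0 ω)) :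
    μ[fun ω => G ω * (Y1 ω - Y0 ω) | mX.comap X]
      =ᵐ[μ] fun ω => (μ1 (X ω) - μ0 (X ω)) * μ[G | mX.comap X] ω := by
  have hGb : ∀ ω, |G ω| ≤ 1 := fun ω => abs_le_one_of_mem_Icc (hG01 ω)
  have hGAb : ∀ ω, |G ω * A ω| ≤ 1 := fun ω =>
    abs_mul_le_one (hGb ω) (abs_le_one_of_mem_Icc (hA01 ω))
  have hGeb : ∀ ω, |G ω * e1 (X ω)| ≤ 1 := fun ω =>
    abs_mul_le_one (hGb ω) (abs_le_one_of_mem_Icc (Set.Ioo_subset_Icc_self (he1_mem (X ω))))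
  have iG : Integrable G μ := .of_bound hG.aestronglyMeasurable 1 (ae_of_all _ hGb)
  have iGA : Integrable (fun ω => G ω * A ω) μ :=
    .of_bound (hG.mul hA).aestronglyMeasurable 1 (ae_of_all _ hGAb)
  have iGe : Integrable (fun ω => G ω * e1 (X ω)) μ :=
    .of_bound (hG.mul (he1.comp hX)).aestronglyMeasurable 1 (ae_of_all _ hGeb)
  have hprop0 : CondMeanEq X μ (fun ω => G ω * (1 - A ω)) (fun ω => G ω * (1 - e1 (X ω))) :=
    ((CondMeanEq.refl G).sub hprop iG iG iGA iGe).congr (fun ω => by ring) fun ω => by ring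
  have hunc0' : CondMeanEq X μ (fun ω => G ω * (1 - A ω) * Y0 ω)
      (fun ω => G ω * (1 - e1 (X ω)) * Y0 ω) :=
    ((CondMeanEq.refl _).sub hunc0 (hY0.bdd_mul hG.aestronglyMeasurable (ae_of_all _ hGb))
      (hY0.bdd_mul hG.aestronglyMeasurable (ae_of_all _ hGb))
      (hY0.bdd_mul (hG.mul hA).aestronglyMeasurable (ae_of_all _ hGAb))
      (hY0.bdd_mul (hG.mul (he1.comp hX)).aestronglyMeasurable (ae_of_all _ hGeb))).congr
      (fun ω => by ring) fun ω => by ring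
  have harm1 := condExp_mul_ae_eq_regression_mul hX hG hA he1 hμ1 hGb
    (fun ω => abs_le_one_of_mem_Icc (hA01 ω))
    (fun x => abs_le_one_of_mem_Icc (Set.Ioo_subset_Icc_self (he1_mem x)))
    (fun x => (he1_mem x).1.ne') hY1 hμ1X hprop hreg1 hunc1
  have harm0 := condExp_mul_ae_eq_regression_mul hX hG (measurable_const.sub hA)
    (measurable_const.sub he1) hμ0 hGb (fun ω => abs_one_sub_le_one_of_mem_Icc (hA01 ω))
    (fun x => abs_one_sub_le_one_of_mem_Icc (Set.Ioo_subset_Icc_self (he1_mem x)))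
    (fun x => (sub_pos.2 (he1_mem x).2).ne') hY0 hμ0X hprop0 hreg0 hunc0'
  have hsub := (condExp_congr_ae (ae_of_all μ fun ω => mul_sub (G ω) (Y1 ω) (Y0 ω))).trans
    (condExp_sub (hY1.bdd_mul hG.aestronglyMeasurable (ae_of_all _ hGb))
      (hY0.bdd_mul hG.aestronglyMeasurable (ae_of_all _ hGb)) (mX.comap X))
  filter_upwards [hsub, harm1, harm0] with ω h h₁ h₀
  simp only [h, Pi.sub_apply, h₁, h₀]
  ring

theorem condExp_ae_eq_of_meanIndep_of_target [IsFiniteMeasure μ] (hX : Measurable X)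
    {G Z : Ω → ℝ} {s τ : 𝓧 → ℝ} (hG : Measurable G) (hG01 : ∀ ω, G ω ∈ Set.Icc 0 1)
    (hτ : Measurable τ) (hs1 : ∀ x, s x ≠ 1) (hZ : Integrable Z μ)
    (hτX : Integrable (fun ω => τ (X ω)) μ)
    (hGs : μ[G | mX.comap X] =ᵐ[μ] fun ω => s (X ω))
    (hGZ : μ[fun ω => G ω * Z ω | mX.comap X] =ᵐ[μ] fun ω => s (X ω) * μ[Z | mX.comap X] ω)
    (htarget : CondMeanEq X μ (fun ω => (1 - G ω) * Z ω) (fun ω => (1 - G ω) * τ (X ω))) :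
    μ[Z | mX.comap X] =ᵐ[μ] fun ω => τ (X ω) := by
  have h1Gb : ∀ ω, |1 - G ω| ≤ 1 := fun ω => abs_one_sub_le_one_of_mem_Icc (hG01 ω)
  have iG : Integrable G μ :=
    .of_bound hG.aestronglyMeasurable 1 (ae_of_all _ fun ω => abs_le_one_of_mem_Icc (hG01 ω))
  have i1G : Integrable (fun ω => 1 - G ω) μ := (integrable_const 1).sub iG
  have iGZ : Integrable (fun ω => G ω * Z ω) μ :=
    hZ.bdd_mul hG.aestronglyMeasurable (ae_of_all _ fun ω => abs_le_one_of_mem_Icc (hG01 ω))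
  have i1Gτ : Integrable (fun ω => (1 - G ω) * τ (X ω)) μ :=
    hτX.bdd_mul (measurable_const.sub hG).aestronglyMeasurable (ae_of_all _ h1Gb)
  have h1GZ : μ[fun ω => (1 - G ω) * Z ω | mX.comap X]
      =ᵐ[μ] fun ω => μ[Z | mX.comap X] ω - μ[fun ω => G ω * Z ω | mX.comap X] ω :=
    (condExp_congr_ae (ae_of_all μ fun ω => by simp only [Pi.sub_apply]; ring)).trans
      (condExp_sub hZ iGZ (mX.comap X))
  have h1Gτ : μ[fun ω => (1 - G ω) * Z ω | mX.comap X]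
      =ᵐ[μ] fun ω => τ (X ω) * μ[fun ω => 1 - G ω | mX.comap X] ω :=
    (htarget.condExp_ae_eq hX (hZ.bdd_mul (measurable_const.sub hG).aestronglyMeasurable
      (ae_of_all _ h1Gb)) i1Gτ).trans (condExp_ae_eq_comp_mul hτ (fun ω => by ring) i1Gτ i1G)
  have h1G : μ[fun ω => 1 - G ω | mX.comap X] =ᵐ[μ] fun ω => 1 - μ[G | mX.comap X] ω :=
    (condExp_sub (integrable_const 1) iG (mX.comap X)).trans
      (by rw [condExp_const hX.comap_le]; rfl)
  filter_upwards [hGs, hGZ, h1GZ, h1Gτ, h1G] with ω hg hgz h1gz h1gτ h1g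
  -- `(1 - s) E[Z|X] = E[Z|X] - E[G Z|X] = E[(1 - G) Z|X] = τ(X) E[1 - G|X] = (1 - s) τ(X)`
  refine mul_left_cancel₀ (sub_ne_zero.2 (hs1 (X ω)).symm) ?_
  linear_combination -h1gz + hgz + h1gτ + τ (X ω) * h1g - τ (X ω) * hg

theorem cate_transportability_of_integrable [IsFiniteMeasure μ] (hX : Measurable X)
    {G A Y1 Y0 : Ω → ℝ} {e1 s μ1 μ0 τ : 𝓧 → ℝ} (hG : Measurable G) (hA : Measurable A)
    (he1 : Measurable e1) (hs : Measurable s) (hμ1 : Measurable μ1) (hμ0 : Measurable μ0)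
    (hτ : Measurable τ) (hG01 : ∀ ω, G ω ∈ Set.Icc 0 1) (hA01 : ∀ ω, A ω ∈ Set.Icc 0 1)
    (he1_mem : ∀ x, e1 x ∈ Set.Ioo 0 1) (hs_mem : ∀ x, s x ∈ Set.Ioo 0 1)
    (hY1 : Integrable Y1 μ) (hY0 : Integrable Y0 μ)
    (hμ1X : Integrable (fun ω => μ1 (X ω)) μ) (hμ0X : Integrable (fun ω => μ0 (X ω)) μ)
    (hτX : Integrable (fun ω => τ (X ω)) μ)
    (hprop : CondMeanEq X μ (fun ω => G ω * A ω) (fun ω => G ω * e1 (X ω)))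
    (hsampling : CondMeanEq X μ G (fun ω => s (X ω)))
    (hreg1 : CondMeanEq X μ (fun ω => G ω * A ω * Y1 ω) (fun ω => G ω * A ω * μ1 (X ω)))
    (hreg0 : CondMeanEq X μ (fun ω => G ω * (1 - A ω) * Y0 ω)
      (fun ω => G ω * (1 - A ω) * μ0 (X ω)))
    (hunc1 : CondMeanEq X μ (fun ω => G ω * A ω * Y1 ω) (fun ω => G ω * e1 (X ω) * Y1 ω))
    (hunc0 : CondMeanEq X μ (fun ω => G ω * A ω * Y0 ω) (fun ω => G ω * e1 (X ω) * Y0 ω))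
    (htrans : CondMeanEq X μ (fun ω => G ω * (Y1 ω - Y0 ω)) (fun ω => s (X ω) * (Y1 ω - Y0 ω)))
    (htarget : CondMeanEq X μ (fun ω => (1 - G ω) * (Y1 ω - Y0 ω))
      (fun ω => (1 - G ω) * τ (X ω))) :
    ∀ᵐ ω ∂μ, τ (X ω) = μ1 (X ω) - μ0 (X ω) := by
  have hsb : ∀ ω, |s (X ω)| ≤ 1 := fun ω =>
    abs_le_one_of_mem_Icc (Set.Ioo_subset_Icc_self (hs_mem (X ω)))
  have hsX : Measurable fun ω => s (X ω) := hs.comp hX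
  have iG : Integrable G μ :=
    .of_bound hG.aestronglyMeasurable 1 (ae_of_all _ fun ω => abs_le_one_of_mem_Icc (hG01 ω))
  have isX : Integrable (fun ω => s (X ω)) μ :=
    .of_bound hsX.aestronglyMeasurable 1 (ae_of_all _ hsb)
  have iZ : Integrable (fun ω => Y1 ω - Y0 ω) μ := hY1.sub hY0
  have isZ : Integrable (fun ω => s (X ω) * (Y1 ω - Y0 ω)) μ :=
    iZ.bdd_mul hsX.aestronglyMeasurable (ae_of_all _ hsb)
  have iGZ : Integrable (fun ω => G ω * (Y1 ω - Y0 ω)) μ :=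
    iZ.bdd_mul hG.aestronglyMeasurable (ae_of_all _ fun ω => abs_le_one_of_mem_Icc (hG01 ω))
  have hGs : μ[G | mX.comap X] =ᵐ[μ] fun ω => s (X ω) :=
    (hsampling.condExp_ae_eq hX iG isX).trans (.of_eq (condExp_comp hX hs isX))
  have hGZ : μ[fun ω => G ω * (Y1 ω - Y0 ω) | mX.comap X]
      =ᵐ[μ] fun ω => s (X ω) * μ[fun ω => Y1 ω - Y0 ω | mX.comap X] ω :=
    (htrans.condExp_ae_eq hX iGZ isZ).trans (condExp_ae_eq_comp_mul hs (fun _ => rfl) isZ iZ)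
  have hsource := condExp_mul_sub_ae_eq_regression_sub_mul hX hG hA he1 hμ1 hμ0 hG01 hA01
    he1_mem hY1 hY0 hμ1X hμ0X hprop hreg1 hreg0 hunc1 hunc0
  have htarget' := condExp_ae_eq_of_meanIndep_of_target hX hG hG01 hτ
    (fun x => (hs_mem x).2.ne) iZ hτX hGs hGZ htarget
  filter_upwards [hsource, hGs, hGZ, htarget'] with ω hsrc hg hgz htgt
  rw [← htgt]
  exact mul_left_cancel₀ (hs_mem (X ω)).1.ne' (by rw [← hgz, hsrc, hg]; ring)

theorem integrable_comp_restrict_preimage_setOf_le [IsFiniteMeasure μ] (hX : Measurable X)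
    {f b : 𝓧 → ℝ} (hf : Measurable f) (hb : Measurable b) (hfb : ∀ x, |f x| ≤ b x) (c : ℝ) :
    Integrable (fun ω => f (X ω)) (μ.restrict (X ⁻¹' {x | b x ≤ c})) :=
  .of_bound (hf.comp hX).aestronglyMeasurable c <|
    ae_restrict_of_forall_mem (hX (measurableSet_le hb measurable_const)) fun ω hω =>
      (hfb (X ω)).trans hω

end

theorem cate_transportability_general
    {Ω : Type*} [MeasurableSpace Ω] (ℙ : Measure Ω) [IsProbabilityMeasure ℙ]
    {𝓧 : Type*} [MeasurableSpace 𝓧]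
    (X : Ω → 𝓧) (A G Y1 Y0 : Ω → ℝ)
    (hX : Measurable X) (hA : Measurable A) (hG : Measurable G)
    (hY1 : Integrable Y1 ℙ) (hY0 : Integrable Y0 ℙ)
    (hAbin : ∀ ω, A ω = 0 ∨ A ω = 1) (hGbin : ∀ ω, G ω = 0 ∨ G ω = 1)
    -- consistency: observed outcome
    (Y : Ω → ℝ) (hYdef : ∀ ω, Y ω = A ω * Y1 ω + (1 - A ω) * Y0 ω)
    (e1 s μ1 μ0 : 𝓧 → ℝ)
    (he1meas : Measurable e1) (hsmeas : Measurable s)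
    (hμ1meas : Measurable μ1) (hμ0meas : Measurable μ0)
    -- overlap: 0 < e₁(X) < 1
    (hover : ∀ x, 0 < e1 x ∧ e1 x < 1)
    -- positivity of the sampling score: 0 < s(X) < 1
    (hspos : ∀ x, 0 < s x ∧ s x < 1)
    -- e₁ is a version of P(A=1 | X, G=1)
    (he1ver : ∀ B : Set 𝓧, MeasurableSet B →
      ∫ ω in X ⁻¹' B, G ω * A ω ∂ℙ = ∫ ω in X ⁻¹' B, G ω * e1 (X ω) ∂ℙ)
    -- s is a version of P(G=1 | X)
    (hsver : ∀ B : Set 𝓧, MeasurableSet B →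
      ∫ ω in X ⁻¹' B, G ω ∂ℙ = ∫ ω in X ⁻¹' B, s (X ω) ∂ℙ)
    -- μ₁ is a version of E[Y | X, A=1, G=1]
    (hμ1ver : ∀ B : Set 𝓧, MeasurableSet B →
      ∫ ω in X ⁻¹' B, G ω * A ω * Y ω ∂ℙ = ∫ ω in X ⁻¹' B, G ω * A ω * μ1 (X ω) ∂ℙ)
    -- μ₀ is a version of E[Y | X, A=0, G=1]
    (hμ0ver : ∀ B : Set 𝓧, MeasurableSet B →
      ∫ ω in X ⁻¹' B, G ω * (1 - A ω) * Y ω ∂ℙ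
        = ∫ ω in X ⁻¹' B, G ω * (1 - A ω) * μ0 (X ω) ∂ℙ)
    -- unconfoundedness: (Y(1), Y(0)) ⟂ A | X, G=1
    (hunconf : ∀ f : ℝ × ℝ → ℝ, Measurable f → (∃ C, ∀ p, |f p| ≤ C) →
      ∀ B : Set 𝓧, MeasurableSet B →
      ∫ ω in X ⁻¹' B, G ω * A ω * f (Y1 ω, Y0 ω) ∂ℙ
        = ∫ ω in X ⁻¹' B, G ω * e1 (X ω) * f (Y1 ω, Y0 ω) ∂ℙ)
    -- transportability: (Y(1), Y(0)) ⟂ G | X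
    (htrans : ∀ f : ℝ × ℝ → ℝ, Measurable f → (∃ C, ∀ p, |f p| ≤ C) →
      ∀ B : Set 𝓧, MeasurableSet B →
      ∫ ω in X ⁻¹' B, G ω * f (Y1 ω, Y0 ω) ∂ℙ
        = ∫ ω in X ⁻¹' B, s (X ω) * f (Y1 ω, Y0 ω) ∂ℙ)
    -- τ is a version of E[Y(1) − Y(0) | X, G=0]
    (τ : 𝓧 → ℝ) (hτmeas : Measurable τ)
    (hτver : ∀ B : Set 𝓧, MeasurableSet B →
      ∫ ω in X ⁻¹' B, (1 - G ω) * (Y1 ω - Y0 ω) ∂ℙ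
        = ∫ ω in X ⁻¹' B, (1 - G ω) * τ (X ω) ∂ℙ) :
    ∀ᵐ ω ∂ℙ, τ (X ω) = μ1 (X ω) - μ0 (X ω) := by
  have hG01 : ∀ ω, G ω ∈ Set.Icc (0 : ℝ) 1 := fun ω => by rcases hGbin ω with h | h <;> simp [h]
  have hA01 : ∀ ω, A ω ∈ Set.Icc (0 : ℝ) 1 := fun ω => by rcases hAbin ω with h | h <;> simp [h]
  have hGb : ∀ ω, |G ω| ≤ 1 := fun ω => abs_le_one_of_mem_Icc (hG01 ω)
  have hunconf_int : ∀ φ : ℝ × ℝ → ℝ, Measurable φ → Integrable (fun ω => φ (Y1 ω, Y0 ω)) ℙ →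
      CondMeanEq X ℙ (fun ω => G ω * A ω * φ (Y1 ω, Y0 ω))
        (fun ω => G ω * e1 (X ω) * φ (Y1 ω, Y0 ω)) := fun φ =>
    CondMeanEq.of_forall_bounded (ρ := fun ω => G ω * A ω) (σ := fun ω => G ω * e1 (X ω))
      (W := fun ω => (Y1 ω, Y0 ω)) (hG.mul hA).aestronglyMeasurable
      (hG.mul (he1meas.comp hX)).aestronglyMeasurable
      (fun ω => abs_mul_le_one (hGb ω) (abs_le_one_of_mem_Icc (hA01 ω)))
      (fun ω => abs_mul_le_one (hGb ω) (abs_le_one_of_mem_Icc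
        (Set.Ioo_subset_Icc_self (hover (X ω))))) hunconf
  have htrans_int := CondMeanEq.of_forall_bounded (ρ := G) (σ := fun ω => s (X ω))
    (W := fun ω => (Y1 ω, Y0 ω)) (φ := fun p => p.1 - p.2) hG.aestronglyMeasurable
    (hsmeas.comp hX).aestronglyMeasurable
    hGb (fun ω => abs_le_one_of_mem_Icc (Set.Ioo_subset_Icc_self (hspos (X ω)))) htrans
    (measurable_fst.sub measurable_snd) (hY1.sub hY0)
  have hreg1 : CondMeanEq X ℙ (fun ω => G ω * A ω * Y1 ω) (fun ω => G ω * A ω * μ1 (X ω)) :=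
    CondMeanEq.congr hμ1ver (fun ω => by rcases hAbin ω with h | h <;> simp [hYdef, h]) fun _ => rfl
  have hreg0 : CondMeanEq X ℙ (fun ω => G ω * (1 - A ω) * Y0 ω)
      (fun ω => G ω * (1 - A ω) * μ0 (X ω)) :=
    CondMeanEq.congr hμ0ver (fun ω => by rcases hAbin ω with h | h <;> simp [hYdef, h]) fun _ => rfl
  let b : 𝓧 → ℝ := fun x => max |τ x| (max |μ1 x| |μ0 x|)
  have hb : Measurable b := by fun_prop
  refine ae_of_forall_ae_restrict_preimage_setOf_le X b fun n => ?_
  have hT : MeasurableSet {x | b x ≤ n} := measurableSet_le hb measurable_const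
  exact cate_transportability_of_integrable hX hG hA he1meas hsmeas hμ1meas hμ0meas hτmeas
    hG01 hA01 hover hspos hY1.restrict hY0.restrict
    (integrable_comp_restrict_preimage_setOf_le hX hμ1meas hb
      (fun x => (le_max_left _ _).trans (le_max_right _ _)) n)
    (integrable_comp_restrict_preimage_setOf_le hX hμ0meas hb
      (fun x => (le_max_right _ _).trans (le_max_right _ _)) n)
    (integrable_comp_restrict_preimage_setOf_le hX hτmeas hb (fun x => le_max_left _ _) n)
    (CondMeanEq.restrict he1ver hX hT) (CondMeanEq.restrict hsver hX hT) (hreg1.restrict hX hT)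
    (hreg0.restrict hX hT) ((hunconf_int Prod.fst measurable_fst hY1).restrict hX hT)
    ((hunconf_int Prod.snd measurable_snd hY0).restrict hX hT) (htrans_int.restrict hX hT)
    (CondMeanEq.restrict hτver hX hT)

/-- Under unconfoundedness, overlap and transportability, the target-domain
CATE `τ(X) = E[Y(1) − Y(0) | X, G=0]` equals `μ₁(X) − μ₀(X)` almost surely, where
`μₐ(X) = E[Y | X, A=a, G=1]`. -/
theorem cate_transportability
    {Ω : Type*} [MeasurableSpace Ω] (ℙ : Measure Ω) [IsProbabilityMeasure ℙ]
    {𝓧 : Type*} [MeasurableSpace 𝓧]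
    (X : Ω → 𝓧) (A G Y1 Y0 : Ω → ℝ)
    (hX : Measurable X) (hA : Measurable A) (hG : Measurable G)
    (hY1 : Integrable Y1 ℙ) (hY0 : Integrable Y0 ℙ)
    (hAbin : ∀ ω, A ω = 0 ∨ A ω = 1) (hGbin : ∀ ω, G ω = 0 ∨ G ω = 1)
    -- consistency: observed outcome
    (Y : Ω → ℝ) (hYdef : ∀ ω, Y ω = A ω * Y1 ω + (1 - A ω) * Y0 ω)
    (q : ℝ) (hq : q = ∫ ω, G ω ∂ℙ) (hq0 : 0 < q) (hq1 : q < 1)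
    (e1 s μ1 μ0 : 𝓧 → ℝ)
    (he1meas : Measurable e1) (hsmeas : Measurable s)
    (hμ1meas : Measurable μ1) (hμ0meas : Measurable μ0)
    -- overlap: 0 < e₁(X) < 1
    (hover : ∀ x, 0 < e1 x ∧ e1 x < 1)
    -- positivity of the sampling score: 0 < s(X) < 1
    (hspos : ∀ x, 0 < s x ∧ s x < 1)
    -- e₁ is a version of P(A=1 | X, G=1)
    (he1ver : ∀ B : Set 𝓧, MeasurableSet B →
      ∫ ω in X ⁻¹' B, G ω * A ω ∂ℙ = ∫ ω in X ⁻¹' B, G ω * e1 (X ω) ∂ℙ)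
    -- s is a version of P(G=1 | X)
    (hsver : ∀ B : Set 𝓧, MeasurableSet B →
      ∫ ω in X ⁻¹' B, G ω ∂ℙ = ∫ ω in X ⁻¹' B, s (X ω) ∂ℙ)
    -- μ₁ is a version of E[Y | X, A=1, G=1]
    (hμ1ver : ∀ B : Set 𝓧, MeasurableSet B →
      ∫ ω in X ⁻¹' B, G ω * A ω * Y ω ∂ℙ = ∫ ω in X ⁻¹' B, G ω * A ω * μ1 (X ω) ∂ℙ)
    -- μ₀ is a version of E[Y | X, A=0, G=1]
    (hμ0ver : ∀ B : Set 𝓧, MeasurableSet B →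
      ∫ ω in X ⁻¹' B, G ω * (1 - A ω) * Y ω ∂ℙ
        = ∫ ω in X ⁻¹' B, G ω * (1 - A ω) * μ0 (X ω) ∂ℙ)
    -- unconfoundedness: (Y(1), Y(0)) ⟂ A | X, G=1
    (hunconf : ∀ f : ℝ × ℝ → ℝ, Measurable f → (∃ C, ∀ p, |f p| ≤ C) →
      ∀ B : Set 𝓧, MeasurableSet B →
      ∫ ω in X ⁻¹' B, G ω * A ω * f (Y1 ω, Y0 ω) ∂ℙ
        = ∫ ω in X ⁻¹' B, G ω * e1 (X ω) * f (Y1 ω, Y0 ω) ∂ℙ)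
    -- transportability: (Y(1), Y(0)) ⟂ G | X
    (htrans : ∀ f : ℝ × ℝ → ℝ, Measurable f → (∃ C, ∀ p, |f p| ≤ C) →
      ∀ B : Set 𝓧, MeasurableSet B →
      ∫ ω in X ⁻¹' B, G ω * f (Y1 ω, Y0 ω) ∂ℙ
        = ∫ ω in X ⁻¹' B, s (X ω) * f (Y1 ω, Y0 ω) ∂ℙ)
    -- τ is a version of E[Y(1) − Y(0) | X, G=0]
    (τ : 𝓧 → ℝ) (hτmeas : Measurable τ)
    (hτver : ∀ B : Set 𝓧, MeasurableSet B →
      ∫ ω in X ⁻¹' B, (1 - G ω) * (Y1 ω - Y0 ω) ∂ℙ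
        = ∫ ω in X ⁻¹' B, (1 - G ω) * τ (X ω) ∂ℙ) :
    ∀ᵐ ω ∂ℙ, τ (X ω) = μ1 (X ω) - μ0 (X ω) :=
  cate_transportability_general ℙ X A G Y1 Y0 hX hA hG hY1 hY0 hAbin hGbin Y hYdef e1 s μ1 μ0
    he1meas hsmeas hμ1meas hμ0meas hover hspos he1ver hsver hμ1ver hμ0ver hunconf htrans τ hτmeas
    hτver
end

section
/- Under unconfoundedness, overlap, and transportability, the target-domain reward R(π) = E[π(X)Y(1) + (1−π(X))Y(0) | G=0] is identified as R(π) = E[(1−G)/(1−q) · {π(X)μ₁(X) + (1−π(X))μ₀(X)}], where q = P(G=1) and μₐ(X) = E[Y | X, A=a, G=1]. -/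
/-!
Write `E[· | X]` for conditional expectation given `σ(X)`. Truncating the outcomes, the bounded
forms of transportability and unconfoundedness extend to every integrable function `f` of
`(Y(1), Y(0))`: `E[G f | X] = s(X) E[f | X]` and `E[G A f | X] = s(X) e₁(X) E[f | X]`, hence by
subtraction `E[G (1 - A) f | X] = s(X) (1 - e₁(X)) E[f | X]`. Applied to the outcome regression
this gives `s e₁ μ₁(X) = E[G A Y(1) | X] = s e₁ E[Y(1) | X]`, so by overlap `μ₁(X) = E[Y(1) | X]`.
Then `E[(1 - G) Y(1) | X] = (1 - s(X)) μ₁(X) = E[(1 - G) μ₁(X) | X]`, and integrating against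
`π(X)`, and likewise for the control arm against `1 - π(X)`, gives the identity.
-/

open MeasureTheory Filter Topology

/-- The case `ψ = 1` makes `w = E[c | m]`. With `W = (Y(1), Y(0))` and `m = σ(X)`,
transportability is the case `c = G`, `w = s(X)`, and unconfoundedness the case `c = G A`,
`w = s(X) e₁(X)`. -/
def CondMeanIndep {Ω β : Type*} {m₀ : MeasurableSpace Ω} [MeasurableSpace β]
    (μ : Measure[m₀] Ω) (m : MeasurableSpace Ω) (W : Ω → β) (c w : Ω → ℝ) : Prop :=
  ∀ ψ : β → ℝ, Measurable ψ → Integrable (ψ ∘ W) μ → μ[c * (ψ ∘ W)|m] =ᵐ[μ] w * μ[ψ ∘ W|m]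

section

variable {Ω 𝓧 β : Type*} [MeasurableSpace Ω] [m𝓧 : MeasurableSpace 𝓧] [MeasurableSpace β]
  {μ : Measure Ω} {X : Ω → 𝓧} {W : Ω → β}

lemma abs_max_neg_min_le (t : ℝ) {n : ℝ} (hn : 0 ≤ n) : |max (-n) (min t n)| ≤ |t| :=
  abs_le.2 ⟨le_max_of_le_right (le_min (neg_abs_le t) (by linarith [abs_nonneg t])),
    max_le (by linarith [abs_nonneg t]) (min_le_of_left_le (le_abs_self t))⟩

lemma tendsto_max_neg_min (t : ℝ) :
    Tendsto (fun n : ℕ => max (-(n : ℝ)) (min t n)) atTop (𝓝 t) := by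
  refine tendsto_atTop_of_eventually_const (i₀ := ⌈|t|⌉₊) fun n hn => ?_
  have : |t| ≤ n := (Nat.le_ceil _).trans (by exact_mod_cast hn)
  rw [min_eq_left ((le_abs_self t).trans this), max_eq_right (by linarith [neg_abs_le t])]

lemma tendsto_integral_mul_max_neg_min {a V : Ω → ℝ} {C : ℝ} (ha : AEStronglyMeasurable a μ)
    (haC : ∀ ω, |a ω| ≤ C) (hV : Integrable V μ) :
    Tendsto (fun n : ℕ => ∫ ω, a ω * max (-(n : ℝ)) (min (V ω) n) ∂μ) atTop
      (𝓝 (∫ ω, a ω * V ω ∂μ)) := by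
  refine tendsto_integral_of_dominated_convergence (fun ω => C * |V ω|)
    (fun n => ha.mul ?_) (hV.abs.const_mul C) (fun n => ae_of_all _ fun ω => ?_)
    (ae_of_all _ fun ω => (tendsto_max_neg_min (V ω)).const_mul (a ω))
  · exact (continuous_const.max (continuous_id.min continuous_const)).comp_aestronglyMeasurable
      hV.aestronglyMeasurable
  · rw [Real.norm_eq_abs, abs_mul]
    exact mul_le_mul (haC ω) (abs_max_neg_min_le _ n.cast_nonneg) (abs_nonneg _)
      ((abs_nonneg _).trans (haC ω))

lemma integral_mul_eq_of_forall_bounded {a b V : Ω → ℝ} {C : ℝ}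
    (ha : AEStronglyMeasurable a μ) (hb : AEStronglyMeasurable b μ)
    (haC : ∀ ω, |a ω| ≤ C) (hbC : ∀ ω, |b ω| ≤ C) (hV : Integrable V μ)
    (h : ∀ ψ : ℝ → ℝ, Measurable ψ → (∃ K, ∀ t, |ψ t| ≤ K) →
      ∫ ω, a ω * ψ (V ω) ∂μ = ∫ ω, b ω * ψ (V ω) ∂μ) :
    ∫ ω, a ω * V ω ∂μ = ∫ ω, b ω * V ω ∂μ := by
  refine tendsto_nhds_unique (tendsto_integral_mul_max_neg_min ha haC hV) ?_
  refine (tendsto_integral_mul_max_neg_min hb hbC hV).congr fun n =>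
    (h (fun t => max (-(n : ℝ)) (min t n)) (measurable_const.max (measurable_id.min
      measurable_const)) ⟨n, fun t => abs_le.2 ⟨le_max_left _ _,
        max_le (by simp) (min_le_right _ _)⟩⟩).symm

lemma condExp_comap_ae_eq_of_setIntegral_preimage_eq [IsFiniteMeasure μ] (hX : Measurable X)
    {f g : Ω → ℝ} (hf : Integrable f μ) (hg : Integrable g μ)
    (h : ∀ B, MeasurableSet B → ∫ ω in X ⁻¹' B, f ω ∂μ = ∫ ω in X ⁻¹' B, g ω ∂μ) :
    μ[f|m𝓧.comap X] =ᵐ[μ] μ[g|m𝓧.comap X] := by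
  refine ae_eq_condExp_of_forall_setIntegral_eq hX.comap_le hg
    (fun _ _ _ => integrable_condExp.integrableOn) ?_
    stronglyMeasurable_condExp.aestronglyMeasurable
  rintro _ ⟨B, hB, rfl⟩ -
  rw [setIntegral_condExp hX.comap_le hf ⟨B, hB, rfl⟩, h B hB]

lemma condExp_comap_comp_mul_ae_eq [IsFiniteMeasure μ] (hX : Measurable X) {h : 𝓧 → ℝ} {C : ℝ}
    (hh : Measurable h) (hC : ∀ x, |h x| ≤ C) {f : Ω → ℝ} (hf : Integrable f μ) :
    μ[(h ∘ X) * f|m𝓧.comap X] =ᵐ[μ] (h ∘ X) * μ[f|m𝓧.comap X] :=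
  condExp_stronglyMeasurable_mul_of_bound hX.comap_le
    (hh.comp (comap_measurable X)).stronglyMeasurable hf C (ae_of_all _ fun ω => hC (X ω))

lemma integral_comp_mul_eq_of_condExp_comap_ae_eq [IsFiniteMeasure μ] (hX : Measurable X)
    {h : 𝓧 → ℝ} {C : ℝ} (hh : Measurable h) (hC : ∀ x, |h x| ≤ C) {f g : Ω → ℝ}
    (hf : Integrable f μ) (hg : Integrable g μ)
    (hfg : μ[f|m𝓧.comap X] =ᵐ[μ] μ[g|m𝓧.comap X]) :
    ∫ ω, h (X ω) * f ω ∂μ = ∫ ω, h (X ω) * g ω ∂μ :=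
  calc ∫ ω, h (X ω) * f ω ∂μ = ∫ ω, μ[(h ∘ X) * f|m𝓧.comap X] ω ∂μ :=
        (integral_condExp hX.comap_le).symm
    _ = ∫ ω, ((h ∘ X) * μ[g|m𝓧.comap X]) ω ∂μ :=
        integral_congr_ae ((condExp_comap_comp_mul_ae_eq hX hh hC hf).trans
          (EventuallyEq.rfl.mul hfg))
    _ = ∫ ω, μ[(h ∘ X) * g|m𝓧.comap X] ω ∂μ :=
        integral_congr_ae (condExp_comap_comp_mul_ae_eq hX hh hC hg).symm
    _ = ∫ ω, h (X ω) * g ω ∂μ := integral_condExp hX.comap_le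

lemma condExp_sub_mul_ae_eq {m : MeasurableSpace Ω} {c c' V w w' : Ω → ℝ}
    (hcV : Integrable (c * V) μ) (hc'V : Integrable (c' * V) μ)
    (h : μ[c * V|m] =ᵐ[μ] w * μ[V|m]) (h' : μ[c' * V|m] =ᵐ[μ] w' * μ[V|m]) :
    μ[(c - c') * V|m] =ᵐ[μ] (w - w') * μ[V|m] := by
  rw [sub_mul]
  filter_upwards [condExp_sub hcV hc'V m, h, h'] with ω h₀ h₁ h₂
  simp only [h₀, Pi.sub_apply, h₁, h₂, Pi.mul_apply, sub_mul]

/-- A set integral of a non-integrable function is `0`, so an identity of set integrals says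
nothing until integrability is known; here it is recovered on the events `{|g(X)| ≤ n}`. -/
lemma integrable_mul_comp_of_setIntegral_preimage_eq [IsFiniteMeasure μ] (hX : Measurable X)
    {c Z : Ω → ℝ} {g : 𝓧 → ℝ} (hc : Measurable c) (hc0 : ∀ ω, 0 ≤ c ω) (hc1 : ∀ ω, c ω ≤ 1)
    (hg : Measurable g) (hZ : Integrable Z μ)
    (h : ∀ B, MeasurableSet B → ∫ ω in X ⁻¹' B, Z ω ∂μ = ∫ ω in X ⁻¹' B, c ω * g (X ω) ∂μ) :
    Integrable (fun ω => c ω * g (X ω)) μ := by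
  set f := fun ω => c ω * g (X ω)
  set S : ℕ → Set 𝓧 := fun n => {x | |g x| ≤ n}
  have hS n : MeasurableSet (S n) := measurableSet_le hg.abs measurable_const
  have hP : MeasurableSet {x | 0 ≤ g x} := measurableSet_le measurable_const hg
  have cover : AECover μ atTop fun n => X ⁻¹' S n :=
    ⟨ae_of_all _ fun ω => (eventually_ge_atTop ⌈|g (X ω)|⌉₊).mono fun n hn =>
      show |g (X ω)| ≤ n from (Nat.le_ceil _).trans (by exact_mod_cast hn), fun n => hX (hS n)⟩
  have hZB B : |∫ ω in X ⁻¹' B, Z ω ∂μ| ≤ ∫ ω, |Z ω| ∂μ := abs_integral_le_integral_abs.trans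
    (setIntegral_le_integral hZ.abs (ae_of_all _ fun _ => abs_nonneg _))
  have hfS n : IntegrableOn f (X ⁻¹' S n) μ := by
    refine Measure.integrableOn_of_bounded (measure_ne_top _ _)
      (hc.mul (hg.comp hX)).aestronglyMeasurable (M := n) ?_
    refine (ae_restrict_iff' (hX (hS n))).2 (ae_of_all _ fun ω (hω : |g (X ω)| ≤ n) => ?_)
    rw [Real.norm_eq_abs, abs_mul, abs_of_nonneg (hc0 ω)]
    exact (mul_le_of_le_one_left (abs_nonneg _) (hc1 ω)).trans hω
  refine cover.integrable_of_integral_norm_bounded (2 * ∫ ω, |Z ω| ∂μ) hfS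
    (Eventually.of_forall fun n => ?_)
  -- `c * g(X)` has the sign of `g(X)`, so `∫ ‖c * g(X)‖` over `X⁻¹(S n)` is a difference of two
  -- set integrals of `c * g(X)` over `X`-events, i.e. of two set integrals of `Z`.
  rw [← integral_inter_add_sdiff (hX hP) (hfS n).norm,
    setIntegral_congr_fun ((hX (hS n)).inter (hX hP)) (g := f) fun ω hω =>
      Real.norm_of_nonneg (mul_nonneg (hc0 ω) hω.2),
    setIntegral_congr_fun ((hX (hS n)).diff (hX hP)) (g := fun ω => -f ω) fun ω hω =>
      Real.norm_of_nonpos (mul_nonpos_of_nonneg_of_nonpos (hc0 ω) (le_of_not_ge hω.2)),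
    integral_neg, ← Set.preimage_inter, ← Set.preimage_sdiff, ← h _ ((hS n).inter hP),
    ← h _ ((hS n).diff hP)]
  linarith [hZB (S n ∩ {x | 0 ≤ g x}), hZB (S n \ {x | 0 ≤ g x}),
    le_abs_self (∫ ω in X ⁻¹' (S n ∩ {x | 0 ≤ g x}), Z ω ∂μ),
    neg_le_abs (∫ ω in X ⁻¹' (S n \ {x | 0 ≤ g x}), Z ω ∂μ)]

lemma comp_ae_eq_condExp_of_setIntegral_mul_eq [IsFiniteMeasure μ] (hX : Measurable X)
    {c Z w : Ω → ℝ} {g : 𝓧 → ℝ} (hc : Measurable c) (hc0 : ∀ ω, 0 ≤ c ω) (hc1 : ∀ ω, c ω ≤ 1)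
    (hZ : Integrable Z μ) (hg : Measurable g) (hw : ∀ᵐ ω ∂μ, w ω ≠ 0)
    (hcE : μ[c|m𝓧.comap X] =ᵐ[μ] w) (hcZE : μ[c * Z|m𝓧.comap X] =ᵐ[μ] w * μ[Z|m𝓧.comap X])
    (hreg : ∀ B, MeasurableSet B →
      ∫ ω in X ⁻¹' B, c ω * Z ω ∂μ = ∫ ω in X ⁻¹' B, c ω * g (X ω) ∂μ) :
    g ∘ X =ᵐ[μ] μ[Z|m𝓧.comap X] := by
  have hcb : ∀ᵐ ω ∂μ, ‖c ω‖ ≤ 1 :=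
    ae_of_all _ fun ω => (Real.norm_of_nonneg (hc0 ω)).trans_le (hc1 ω)
  have hcZ : Integrable (c * Z) μ := hZ.bdd_mul hc.aestronglyMeasurable hcb
  have hcg := integrable_mul_comp_of_setIntegral_preimage_eq hX hc hc0 hc1 hg hcZ hreg
  have hgc : (fun ω => c ω * g (X ω)) = (g ∘ X) * c := funext fun ω => mul_comm _ _
  have hE := condExp_comap_ae_eq_of_setIntegral_preimage_eq hX hcZ hcg hreg
  rw [hgc] at hcg hE
  have pull : μ[(g ∘ X) * c|m𝓧.comap X] =ᵐ[μ] (g ∘ X) * μ[c|m𝓧.comap X] :=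
    condExp_mul_of_stronglyMeasurable_left (hg.comp (comap_measurable X)).stronglyMeasurable hcg
      ((integrable_const (1 : ℝ)).bdd_mul hc.aestronglyMeasurable hcb |>.congr
        (ae_of_all _ fun ω => mul_one _))
  -- `w E[Z] = E[c Z] = E[c g(X)] = g(X) E[c] = g(X) w`, and `w ≠ 0`.
  filter_upwards [hw, hcE, hcZE, hE, pull] with ω hw hcE hcZE hE pull
  simp only [Pi.mul_apply, Function.comp_apply] at hcZE pull ⊢
  exact mul_left_cancel₀ hw (by rw [← hcZE, hE, pull, hcE, mul_comm])

lemma condExp_one_sub_mul_ae_eq [IsFiniteMeasure μ] (hX : Measurable X) {G Z : Ω → ℝ}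
    {s g : 𝓧 → ℝ} (hG : Measurable G) (hGb : ∀ ω, |G ω| ≤ 1) (hZ : Integrable Z μ)
    (hg : Measurable g) (hgZ : g ∘ X =ᵐ[μ] μ[Z|m𝓧.comap X])
    (hGE : μ[G|m𝓧.comap X] =ᵐ[μ] s ∘ X)
    (hGZ : μ[G * Z|m𝓧.comap X] =ᵐ[μ] (s ∘ X) * μ[Z|m𝓧.comap X]) :
    μ[(1 - G) * Z|m𝓧.comap X] =ᵐ[μ] μ[(1 - G) * (g ∘ X)|m𝓧.comap X] := by
  have hgm : StronglyMeasurable[m𝓧.comap X] (g ∘ X) :=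
    (hg.comp (comap_measurable X)).stronglyMeasurable
  have hgi : Integrable (g ∘ X) μ := integrable_condExp.congr hgZ.symm
  have hGb' : ∀ᵐ ω ∂μ, ‖G ω‖ ≤ 1 := ae_of_all _ hGb
  have hGi : Integrable G μ := (integrable_const (1 : ℝ)).bdd_mul hG.aestronglyMeasurable hGb'
    |>.congr (ae_of_all _ fun ω => mul_one _)
  have hgE : μ[g ∘ X|m𝓧.comap X] = g ∘ X := condExp_of_stronglyMeasurable hX.comap_le hgm hgi
  have hGg : μ[G * (g ∘ X)|m𝓧.comap X] =ᵐ[μ] (s ∘ X) * μ[g ∘ X|m𝓧.comap X] := by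
    rw [hgE]
    exact (condExp_mul_of_stronglyMeasurable_right hgm (hgi.bdd_mul hG.aestronglyMeasurable hGb')
      hGi).trans (hGE.mul EventuallyEq.rfl)
  have hone (V : Ω → ℝ) : μ[1 * V|m𝓧.comap X] =ᵐ[μ] 1 * μ[V|m𝓧.comap X] := by
    simp only [one_mul]; rfl
  have hZ' := condExp_sub_mul_ae_eq (by simpa using hZ) (hZ.bdd_mul hG.aestronglyMeasurable hGb')
    (hone Z) hGZ
  have hg' := condExp_sub_mul_ae_eq (by simpa using hgi)
    (hgi.bdd_mul hG.aestronglyMeasurable hGb') (hone _) hGg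
  refine hZ'.trans ((EventuallyEq.rfl.mul (hgZ.symm.trans (EventuallyEq.of_eq hgE.symm))).trans
    hg'.symm)

lemma condMeanIndep_comp [IsFiniteMeasure μ] (hX : Measurable X) {h : 𝓧 → ℝ} {C : ℝ}
    (hh : Measurable h) (hC : ∀ x, |h x| ≤ C) :
    CondMeanIndep μ (m𝓧.comap X) W (h ∘ X) (h ∘ X) :=
  fun _ _ hψW => condExp_comap_comp_mul_ae_eq hX hh hC hψW

lemma CondMeanIndep.mul_comp [IsFiniteMeasure μ] (hX : Measurable X) {c w : Ω → ℝ} {h : 𝓧 → ℝ}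
    {C D : ℝ} (hcw : CondMeanIndep μ (m𝓧.comap X) W c w) (hc : Measurable c)
    (hcC : ∀ ω, |c ω| ≤ C) (hh : Measurable h) (hD : ∀ x, |h x| ≤ D) :
    CondMeanIndep μ (m𝓧.comap X) W (c * (h ∘ X)) (w * (h ∘ X)) := fun ψ hψ hψW => by
  rw [show c * (h ∘ X) * (ψ ∘ W) = (h ∘ X) * (c * (ψ ∘ W)) by ring,
    show w * (h ∘ X) * μ[ψ ∘ W|m𝓧.comap X] = (h ∘ X) * (w * μ[ψ ∘ W|m𝓧.comap X]) by ring]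
  exact (condExp_comap_comp_mul_ae_eq hX hh hD
    (hψW.bdd_mul hc.aestronglyMeasurable (ae_of_all _ hcC))).trans
    (EventuallyEq.rfl.mul (hcw ψ hψ hψW))

lemma CondMeanIndep.sub {c c' w w' : Ω → ℝ} {C : ℝ}
    (hcw : CondMeanIndep μ (m𝓧.comap X) W c w) (hc'w' : CondMeanIndep μ (m𝓧.comap X) W c' w')
    (hc : AEStronglyMeasurable c μ) (hc' : AEStronglyMeasurable c' μ) (hcC : ∀ ω, |c ω| ≤ C)
    (hc'C : ∀ ω, |c' ω| ≤ C) :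
    CondMeanIndep μ (m𝓧.comap X) W (c - c') (w - w') := fun ψ hψ hψW =>
  condExp_sub_mul_ae_eq (hψW.bdd_mul hc (ae_of_all _ hcC)) (hψW.bdd_mul hc' (ae_of_all _ hc'C))
    (hcw ψ hψ hψW) (hc'w' ψ hψ hψW)

lemma CondMeanIndep.congr_of_forall_bounded [IsFiniteMeasure μ] (hX : Measurable X)
    {a b w : Ω → ℝ} {C : ℝ} (hbw : CondMeanIndep μ (m𝓧.comap X) W b w) (ha : Measurable a)
    (hb : Measurable b) (haC : ∀ ω, |a ω| ≤ C) (hbC : ∀ ω, |b ω| ≤ C)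
    (h : ∀ f : β → ℝ, Measurable f → (∃ K, ∀ p, |f p| ≤ K) → ∀ B, MeasurableSet B →
      ∫ ω in X ⁻¹' B, a ω * f (W ω) ∂μ = ∫ ω in X ⁻¹' B, b ω * f (W ω) ∂μ) :
    CondMeanIndep μ (m𝓧.comap X) W a w := fun φ hφ hφW =>
  (condExp_comap_ae_eq_of_setIntegral_preimage_eq hX
    (hφW.bdd_mul ha.aestronglyMeasurable (ae_of_all _ haC))
    (hφW.bdd_mul hb.aestronglyMeasurable (ae_of_all _ hbC)) fun B hB =>
    integral_mul_eq_of_forall_bounded ha.aestronglyMeasurable hb.aestronglyMeasurable haC hbC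
      hφW.restrict fun ψ hψ ⟨K, hK⟩ => h (ψ ∘ φ) (hψ.comp hφ) ⟨K, fun _ => hK _⟩ B hB).trans
    (hbw φ hφ hφW)

lemma CondMeanIndep.integral_comp_mul_one_sub_mul_eq [IsFiniteMeasure μ] (hX : Measurable X)
    {G c w : Ω → ℝ} {s g h : 𝓧 → ℝ} {φ : β → ℝ}
    (hGs : CondMeanIndep μ (m𝓧.comap X) W G (s ∘ X)) (hcw : CondMeanIndep μ (m𝓧.comap X) W c w)
    (hG : Measurable G) (hGb : ∀ ω, |G ω| ≤ 1)
    (hc : Measurable c) (hc0 : ∀ ω, 0 ≤ c ω) (hc1 : ∀ ω, c ω ≤ 1) (hw : ∀ᵐ ω ∂μ, w ω ≠ 0)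
    (hg : Measurable g) (hh : Measurable h) (hhb : ∀ x, |h x| ≤ 1)
    (hφ : Measurable φ) (hφW : Integrable (φ ∘ W) μ)
    (hreg : ∀ B, MeasurableSet B →
      ∫ ω in X ⁻¹' B, c ω * φ (W ω) ∂μ = ∫ ω in X ⁻¹' B, c ω * g (X ω) ∂μ) :
    Integrable (g ∘ X) μ ∧
      ∫ ω, h (X ω) * ((1 - G ω) * φ (W ω)) ∂μ = ∫ ω, h (X ω) * ((1 - G ω) * g (X ω)) ∂μ := by
  have hE1 : μ[(1 : Ω → ℝ)|m𝓧.comap X] = 1 := condExp_const hX.comap_le (1 : ℝ)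
  have h1W : (fun _ => (1 : ℝ)) ∘ W = 1 := rfl
  have hGE := hGs _ measurable_const (integrable_const 1)
  have hcE := hcw _ measurable_const (integrable_const 1)
  rw [h1W, mul_one, hE1, mul_one] at hGE hcE
  have hgZ := comp_ae_eq_condExp_of_setIntegral_mul_eq hX hc hc0 hc1 hφW hg hw hcE
    (hcw φ hφ hφW) hreg
  have hgi : Integrable (g ∘ X) μ := integrable_condExp.congr hgZ.symm
  have h1G : ∀ᵐ ω ∂μ, ‖(1 - G) ω‖ ≤ 2 := ae_of_all _ fun ω =>
    show |1 - G ω| ≤ 2 from (abs_sub _ _).trans (by rw [abs_one]; linarith [hGb ω])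
  refine ⟨hgi, integral_comp_mul_eq_of_condExp_comap_ae_eq hX hh hhb
    (hφW.bdd_mul (measurable_const.sub hG).aestronglyMeasurable h1G)
    (hgi.bdd_mul (measurable_const.sub hG).aestronglyMeasurable h1G)
    (condExp_one_sub_mul_ae_eq hX hG hGb hφW hg hgZ hGE (hGs φ hφ hφW))⟩

end

theorem reward_identification_general
    {Ω : Type*} [MeasurableSpace Ω] (ℙ : Measure Ω) [IsProbabilityMeasure ℙ]
    {𝓧 : Type*} [MeasurableSpace 𝓧]
    (X : Ω → 𝓧) (A G Y1 Y0 : Ω → ℝ)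
    (hX : Measurable X) (hA : Measurable A) (hG : Measurable G)
    (hY1 : Integrable Y1 ℙ) (hY0 : Integrable Y0 ℙ)
    (hAbin : ∀ ω, A ω = 0 ∨ A ω = 1) (hGbin : ∀ ω, G ω = 0 ∨ G ω = 1)
    -- consistency: observed outcome
    (Y : Ω → ℝ) (hYdef : ∀ ω, Y ω = A ω * Y1 ω + (1 - A ω) * Y0 ω)
    (q : ℝ)
    (e1 s μ1 μ0 : 𝓧 → ℝ)
    (he1meas : Measurable e1) (hsmeas : Measurable s)
    (hμ1meas : Measurable μ1) (hμ0meas : Measurable μ0)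
    -- overlap: 0 < e₁(X) < 1
    (hover : ∀ x, 0 < e1 x ∧ e1 x < 1)
    -- positivity of the sampling score: 0 < s(X) < 1
    (hspos : ∀ x, 0 < s x ∧ s x < 1)
    -- μ₁ is a version of E[Y | X, A=1, G=1]
    (hμ1ver : ∀ B : Set 𝓧, MeasurableSet B →
      ∫ ω in X ⁻¹' B, G ω * A ω * Y ω ∂ℙ = ∫ ω in X ⁻¹' B, G ω * A ω * μ1 (X ω) ∂ℙ)
    -- μ₀ is a version of E[Y | X, A=0, G=1]
    (hμ0ver : ∀ B : Set 𝓧, MeasurableSet B →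
      ∫ ω in X ⁻¹' B, G ω * (1 - A ω) * Y ω ∂ℙ
        = ∫ ω in X ⁻¹' B, G ω * (1 - A ω) * μ0 (X ω) ∂ℙ)
    -- unconfoundedness: (Y(1), Y(0)) ⟂ A | X, G=1
    (hunconf : ∀ f : ℝ × ℝ → ℝ, Measurable f → (∃ C, ∀ p, |f p| ≤ C) →
      ∀ B : Set 𝓧, MeasurableSet B →
      ∫ ω in X ⁻¹' B, G ω * A ω * f (Y1 ω, Y0 ω) ∂ℙ
        = ∫ ω in X ⁻¹' B, G ω * e1 (X ω) * f (Y1 ω, Y0 ω) ∂ℙ)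
    -- transportability: (Y(1), Y(0)) ⟂ G | X
    (htrans : ∀ f : ℝ × ℝ → ℝ, Measurable f → (∃ C, ∀ p, |f p| ≤ C) →
      ∀ B : Set 𝓧, MeasurableSet B →
      ∫ ω in X ⁻¹' B, G ω * f (Y1 ω, Y0 ω) ∂ℙ
        = ∫ ω in X ⁻¹' B, s (X ω) * f (Y1 ω, Y0 ω) ∂ℙ)
    -- a policy
    (π : 𝓧 → ℝ) (hπmeas : Measurable π) (hπbin : ∀ x, π x = 0 ∨ π x = 1) :
    (1 / (1 - q)) * ∫ ω, (1 - G ω) * (π (X ω) * Y1 ω + (1 - π (X ω)) * Y0 ω) ∂ℙ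
      = ∫ ω, ((1 - G ω) / (1 - q))
          * (π (X ω) * μ1 (X ω) + (1 - π (X ω)) * μ0 (X ω)) ∂ℙ := by
  set W : Ω → ℝ × ℝ := fun ω => (Y1 ω, Y0 ω)
  have hG01 ω : 0 ≤ G ω ∧ G ω ≤ 1 := by rcases hGbin ω with h | h <;> simp [h]
  have hGb ω : |G ω| ≤ 1 := abs_le.2 ⟨by linarith [hG01 ω], (hG01 ω).2⟩
  have hGA01 ω : 0 ≤ G ω * A ω ∧ G ω * A ω ≤ 1 := by rcases hAbin ω with h | h <;> simp [h, hG01]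
  have hGA'01 ω : 0 ≤ G ω * (1 - A ω) ∧ G ω * (1 - A ω) ≤ 1 := by
    rcases hAbin ω with h | h <;> simp [h, hG01]
  have hGAb ω : |G ω * A ω| ≤ 1 := abs_le.2 ⟨by linarith [hGA01 ω], (hGA01 ω).2⟩
  have hsb x : |s x| ≤ 1 := abs_le.2 ⟨by linarith [hspos x], (hspos x).2.le⟩
  have heb x : |e1 x| ≤ 1 := abs_le.2 ⟨by linarith [hover x], (hover x).2.le⟩
  have hGeb ω : |G ω * e1 (X ω)| ≤ 1 := by
    rw [abs_mul]; exact mul_le_one₀ (hGb ω) (abs_nonneg _) (heb _)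
  have hπb x : |π x| ≤ 1 := by rcases hπbin x with h | h <;> simp [h]
  have h1πb x : |1 - π x| ≤ 1 := by rcases hπbin x with h | h <;> simp [h]
  have h1π : Measurable fun x => 1 - π x := measurable_const.sub hπmeas
  have hcons ω : G ω * A ω * Y ω = G ω * A ω * Y1 ω ∧
      G ω * (1 - A ω) * Y ω = G ω * (1 - A ω) * Y0 ω := by
    rcases hAbin ω with h | h <;> simp [hYdef, h]
  have hS : CondMeanIndep ℙ (MeasurableSpace.comap X ‹_›) W G (s ∘ X) :=
    (condMeanIndep_comp hX hsmeas hsb).congr_of_forall_bounded hX hG (hsmeas.comp hX) hGb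
      (fun ω => hsb (X ω)) htrans
  have hT1 : CondMeanIndep ℙ (MeasurableSpace.comap X ‹_›) W (G * A) (s ∘ X * e1 ∘ X) :=
    (hS.mul_comp hX hG hGb he1meas heb).congr_of_forall_bounded hX (hG.mul hA)
      (hG.mul (he1meas.comp hX)) hGAb hGeb hunconf
  have hT0 : CondMeanIndep ℙ (MeasurableSpace.comap X ‹_›) W (G * (1 - A))
      (s ∘ X - s ∘ X * e1 ∘ X) := by
    rw [mul_one_sub]
    exact hS.sub hT1 hG.aestronglyMeasurable (hG.mul hA).aestronglyMeasurable hGb hGAb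
  obtain ⟨hμ1i, arm1⟩ := hS.integral_comp_mul_one_sub_mul_eq hX hT1 hG hGb (hG.mul hA)
    (fun ω => (hGA01 ω).1) (fun ω => (hGA01 ω).2)
    (ae_of_all _ fun ω => mul_ne_zero (hspos (X ω)).1.ne' (hover (X ω)).1.ne')
    hμ1meas hπmeas hπb measurable_fst hY1 fun B hB =>
      (integral_congr_ae (ae_of_all _ fun ω => (hcons ω).1.symm)).trans (hμ1ver B hB)
  obtain ⟨hμ0i, arm0⟩ := hS.integral_comp_mul_one_sub_mul_eq hX hT0 (h := fun x => 1 - π x)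
    hG hGb (hG.mul (measurable_const.sub hA)) (fun ω => (hGA'01 ω).1) (fun ω => (hGA'01 ω).2)
    (ae_of_all _ fun ω => show s (X ω) - s (X ω) * e1 (X ω) ≠ 0 by
      rw [← mul_one_sub]; exact (mul_pos (hspos _).1 (sub_pos.2 (hover _).2)).ne')
    hμ0meas h1π h1πb measurable_snd hY0 fun B hB =>
      (integral_congr_ae (ae_of_all _ fun ω => (hcons ω).2.symm)).trans (hμ0ver B hB)
  have hint {k : 𝓧 → ℝ} {f : Ω → ℝ} (hk : Measurable k) (hkb : ∀ x, |k x| ≤ 1)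
      (hf : Integrable f ℙ) : Integrable (fun ω => k (X ω) * ((1 - G ω) * f ω)) ℙ :=
    (hf.bdd_mul (measurable_const.sub hG).aestronglyMeasurable (ae_of_all _ fun ω =>
      show |1 - G ω| ≤ 1 from abs_le.2 ⟨by linarith [hG01 ω], by linarith [hG01 ω]⟩)).bdd_mul
      (hk.comp hX).aestronglyMeasurable (ae_of_all _ fun ω => hkb (X ω))
  calc (1 / (1 - q)) * ∫ ω, (1 - G ω) * (π (X ω) * Y1 ω + (1 - π (X ω)) * Y0 ω) ∂ℙ
      = (1 / (1 - q)) * ((∫ ω, π (X ω) * ((1 - G ω) * Y1 ω) ∂ℙ)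
          + ∫ ω, (1 - π (X ω)) * ((1 - G ω) * Y0 ω) ∂ℙ) := by
        rw [← integral_add (hint hπmeas hπb hY1) (hint h1π h1πb hY0)]
        congr 1; congr 1; ext ω; ring
    _ = (1 / (1 - q)) * ((∫ ω, π (X ω) * ((1 - G ω) * μ1 (X ω)) ∂ℙ)
          + ∫ ω, (1 - π (X ω)) * ((1 - G ω) * μ0 (X ω)) ∂ℙ) :=
        congrArg _ (congrArg₂ _ arm1 arm0)
    _ = ∫ ω, ((1 - G ω) / (1 - q)) * (π (X ω) * μ1 (X ω) + (1 - π (X ω)) * μ0 (X ω)) ∂ℙ := by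
        rw [← integral_add (hint (f := fun ω => μ1 (X ω)) hπmeas hπb hμ1i)
          (hint (f := fun ω => μ0 (X ω)) h1π h1πb hμ0i), ← integral_const_mul]
        congr 1; ext ω; ring

/-- Under unconfoundedness, overlap and transportability, the target-domain
reward `R(π) = E[π(X)Y(1) + (1−π(X))Y(0) | G=0]` is identified as
`E[(1−G)/(1−q) · {π(X)μ₁(X) + (1−π(X))μ₀(X)}]`. -/
theorem reward_identification
    {Ω : Type*} [MeasurableSpace Ω] (ℙ : Measure Ω) [IsProbabilityMeasure ℙ]
    {𝓧 : Type*} [MeasurableSpace 𝓧]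
    (X : Ω → 𝓧) (A G Y1 Y0 : Ω → ℝ)
    (hX : Measurable X) (hA : Measurable A) (hG : Measurable G)
    (hY1 : Integrable Y1 ℙ) (hY0 : Integrable Y0 ℙ)
    (hAbin : ∀ ω, A ω = 0 ∨ A ω = 1) (hGbin : ∀ ω, G ω = 0 ∨ G ω = 1)
    -- consistency: observed outcome
    (Y : Ω → ℝ) (hYdef : ∀ ω, Y ω = A ω * Y1 ω + (1 - A ω) * Y0 ω)
    (q : ℝ) (hq : q = ∫ ω, G ω ∂ℙ) (hq0 : 0 < q) (hq1 : q < 1)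
    (e1 s μ1 μ0 : 𝓧 → ℝ)
    (he1meas : Measurable e1) (hsmeas : Measurable s)
    (hμ1meas : Measurable μ1) (hμ0meas : Measurable μ0)
    -- overlap: 0 < e₁(X) < 1
    (hover : ∀ x, 0 < e1 x ∧ e1 x < 1)
    -- positivity of the sampling score: 0 < s(X) < 1
    (hspos : ∀ x, 0 < s x ∧ s x < 1)
    -- e₁ is a version of P(A=1 | X, G=1)
    (he1ver : ∀ B : Set 𝓧, MeasurableSet B →
      ∫ ω in X ⁻¹' B, G ω * A ω ∂ℙ = ∫ ω in X ⁻¹' B, G ω * e1 (X ω) ∂ℙ)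
    -- s is a version of P(G=1 | X)
    (hsver : ∀ B : Set 𝓧, MeasurableSet B →
      ∫ ω in X ⁻¹' B, G ω ∂ℙ = ∫ ω in X ⁻¹' B, s (X ω) ∂ℙ)
    -- μ₁ is a version of E[Y | X, A=1, G=1]
    (hμ1ver : ∀ B : Set 𝓧, MeasurableSet B →
      ∫ ω in X ⁻¹' B, G ω * A ω * Y ω ∂ℙ = ∫ ω in X ⁻¹' B, G ω * A ω * μ1 (X ω) ∂ℙ)
    -- μ₀ is a version of E[Y | X, A=0, G=1]
    (hμ0ver : ∀ B : Set 𝓧, MeasurableSet B →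
      ∫ ω in X ⁻¹' B, G ω * (1 - A ω) * Y ω ∂ℙ
        = ∫ ω in X ⁻¹' B, G ω * (1 - A ω) * μ0 (X ω) ∂ℙ)
    -- unconfoundedness: (Y(1), Y(0)) ⟂ A | X, G=1
    (hunconf : ∀ f : ℝ × ℝ → ℝ, Measurable f → (∃ C, ∀ p, |f p| ≤ C) →
      ∀ B : Set 𝓧, MeasurableSet B →
      ∫ ω in X ⁻¹' B, G ω * A ω * f (Y1 ω, Y0 ω) ∂ℙ
        = ∫ ω in X ⁻¹' B, G ω * e1 (X ω) * f (Y1 ω, Y0 ω) ∂ℙ)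
    -- transportability: (Y(1), Y(0)) ⟂ G | X
    (htrans : ∀ f : ℝ × ℝ → ℝ, Measurable f → (∃ C, ∀ p, |f p| ≤ C) →
      ∀ B : Set 𝓧, MeasurableSet B →
      ∫ ω in X ⁻¹' B, G ω * f (Y1 ω, Y0 ω) ∂ℙ
        = ∫ ω in X ⁻¹' B, s (X ω) * f (Y1 ω, Y0 ω) ∂ℙ)
    -- a policy
    (π : 𝓧 → ℝ) (hπmeas : Measurable π) (hπbin : ∀ x, π x = 0 ∨ π x = 1) :
    (1 / (1 - q)) * ∫ ω, (1 - G ω) * (π (X ω) * Y1 ω + (1 - π (X ω)) * Y0 ω) ∂ℙ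
      = ∫ ω, ((1 - G ω) / (1 - q))
          * (π (X ω) * μ1 (X ω) + (1 - π (X ω)) * μ0 (X ω)) ∂ℙ :=
  reward_identification_general ℙ X A G Y1 Y0 hX hA hG hY1 hY0 hAbin hGbin Y hYdef q e1 s μ1 μ0
    he1meas hsmeas hμ1meas hμ0meas hover hspos hμ1ver hμ0ver hunconf htrans π hπmeas hπbin
end

section
/- Under unconfoundedness, overlap, and transportability, the target-domain reward satisfies the inverse-probability-weighting identity: R(π) = E[ (G/(1−q)) · ((1−s(X))/s(X)) · { π(X)·A·Y/e₁(X) + (1−π(X))·(1−A)·Y/(1−e₁(X)) } ], where e₁(X) = P(A=1 | X, G=1), s(X) = P(G=1 | X), and q = P(G=1). -/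
/-!
Write `L c` (`weightedLaw`) for the law of `(X, (Y(1), Y(0)))` under the measure `c · ℙ`.
Unconfoundedness and transportability say precisely that `L (G A) = L (G e₁(X))` and
`L G = L (s(X))`, since both sides are finite measures that agree on measurable rectangles.
Such an identity survives multiplying both densities by a function of `X`, and by subtraction
`L (1 - G) = L (1 - s(X))`. Hence, for `w = π (1 - s) / (s e₁)`,
`L (G A w(X)) = L (G (π (1 - s) / s)(X)) = L (s(X) (π (1 - s) / s)(X)) = L ((1 - G) π(X))`,
and integrating `Y(1)` against both sides gives the treated half of the identity, together with
the integrability of the unbounded inverse-probability weights. The control half is the same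
with `A`, `e₁`, `π` replaced by `1 - A`, `1 - e₁`, `1 - π`.
-/

open MeasureTheory

lemma integrable_of_mem_Icc {Ω : Type*} [MeasurableSpace Ω] {μ : Measure Ω} [IsFiniteMeasure μ]
    {f : Ω → ℝ} (hf : AEStronglyMeasurable f μ) (h01 : ∀ ω, f ω ∈ Set.Icc 0 1) :
    Integrable f μ :=
  .of_bound hf 1 (ae_of_all _ fun ω => by rw [Real.norm_of_nonneg (h01 ω).1]; exact (h01 ω).2)

lemma MeasureTheory.Integrable.mul_of_mem_Icc {Ω : Type*} [MeasurableSpace Ω] {μ : Measure Ω}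
    {f g : Ω → ℝ} (hg : Integrable g μ) (hf : AEStronglyMeasurable f μ)
    (h01 : ∀ ω, f ω ∈ Set.Icc 0 1) : Integrable (fun ω => f ω * g ω) μ :=
  hg.bdd_mul hf (ae_of_all _ fun ω => by rw [Real.norm_of_nonneg (h01 ω).1]; exact (h01 ω).2)

lemma abs_indicator_one_le_one {α : Type*} (t : Set α) (y : α) :
    |t.indicator (1 : α → ℝ) y| ≤ 1 := by
  by_cases h : y ∈ t <;> simp [h]

section WeightedLaw

variable {Ω 𝓧 𝓨 : Type*} [MeasurableSpace Ω] [MeasurableSpace 𝓧] [MeasurableSpace 𝓨]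
  (ℙ : Measure Ω) (X : Ω → 𝓧) (Z : Ω → 𝓨)

noncomputable def weightedLaw (c : Ω → ℝ) : Measure (𝓧 × 𝓨) :=
  (ℙ.withDensity fun ω => ENNReal.ofReal (c ω)).map fun ω => (X ω, Z ω)

variable {ℙ X Z}

lemma aemeasurable_prodMk_withDensity (hX : Measurable X) (hZ : AEMeasurable Z ℙ)
    (ρ : Ω → ENNReal) : AEMeasurable (fun ω => (X ω, Z ω)) (ℙ.withDensity ρ) :=
  (hX.aemeasurable.prodMk hZ).mono_ac (withDensity_absolutelyContinuous _ _)

lemma isFiniteMeasure_weightedLaw {c : Ω → ℝ} (hc : Integrable c ℙ) :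
    IsFiniteMeasure (weightedLaw ℙ X Z c) :=
  have := isFiniteMeasure_withDensity_ofReal hc.2
  Measure.isFiniteMeasure_map _ _

lemma lintegral_weightedLaw (hX : Measurable X) (hZ : AEMeasurable Z ℙ) {c : Ω → ℝ}
    (hc : Measurable c) {g : 𝓧 × 𝓨 → ENNReal} (hg : Measurable g) :
    ∫⁻ p, g p ∂weightedLaw ℙ X Z c = ∫⁻ ω, ENNReal.ofReal (c ω) * g (X ω, Z ω) ∂ℙ := by
  rw [weightedLaw, lintegral_map' hg.aemeasurable (aemeasurable_prodMk_withDensity hX hZ _)]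
  exact lintegral_withDensity_eq_lintegral_mul₀ hc.ennreal_ofReal.aemeasurable
    (hg.comp_aemeasurable (hX.aemeasurable.prodMk hZ))

lemma integral_weightedLaw (hX : Measurable X) (hZ : AEMeasurable Z ℙ) {c : Ω → ℝ}
    (hc : Measurable c) (hc0 : 0 ≤ c) {h : 𝓧 × 𝓨 → ℝ} (hh : Measurable h) :
    ∫ p, h p ∂weightedLaw ℙ X Z c = ∫ ω, c ω * h (X ω, Z ω) ∂ℙ := by
  rw [weightedLaw,
    integral_map (aemeasurable_prodMk_withDensity hX hZ _) hh.aestronglyMeasurable,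
    integral_withDensity_eq_integral_toReal_smul hc.ennreal_ofReal
      (ae_of_all _ fun _ => ENNReal.ofReal_lt_top)]
  simp only [ENNReal.toReal_ofReal (hc0 _), smul_eq_mul]

lemma integrable_weightedLaw_iff (hX : Measurable X) (hZ : AEMeasurable Z ℙ) {c : Ω → ℝ}
    (hc : Measurable c) (hc0 : 0 ≤ c) {h : 𝓧 × 𝓨 → ℝ} (hh : Measurable h) :
    Integrable h (weightedLaw ℙ X Z c) ↔ Integrable (fun ω => c ω * h (X ω, Z ω)) ℙ := by
  rw [weightedLaw,
    integrable_map_measure hh.aestronglyMeasurable (aemeasurable_prodMk_withDensity hX hZ _),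
    integrable_withDensity_iff_integrable_smul' hc.ennreal_ofReal
      (ae_of_all _ fun _ => ENNReal.ofReal_lt_top)]
  simp only [Function.comp_def, ENNReal.toReal_ofReal (hc0 _), smul_eq_mul]

lemma integral_mul_eq_of_weightedLaw_eq (hX : Measurable X) (hZ : AEMeasurable Z ℙ)
    {c d : Ω → ℝ} (hc : Measurable c) (hd : Measurable d) (hc0 : 0 ≤ c) (hd0 : 0 ≤ d)
    (hcd : weightedLaw ℙ X Z c = weightedLaw ℙ X Z d) {h : 𝓧 × 𝓨 → ℝ} (hh : Measurable h) :
    ∫ ω, c ω * h (X ω, Z ω) ∂ℙ = ∫ ω, d ω * h (X ω, Z ω) ∂ℙ := by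
  rw [← integral_weightedLaw hX hZ hc hc0 hh, hcd, integral_weightedLaw hX hZ hd hd0 hh]

lemma integrable_mul_iff_of_weightedLaw_eq (hX : Measurable X) (hZ : AEMeasurable Z ℙ)
    {c d : Ω → ℝ} (hc : Measurable c) (hd : Measurable d) (hc0 : 0 ≤ c) (hd0 : 0 ≤ d)
    (hcd : weightedLaw ℙ X Z c = weightedLaw ℙ X Z d) {h : 𝓧 × 𝓨 → ℝ} (hh : Measurable h) :
    Integrable (fun ω => c ω * h (X ω, Z ω)) ℙ ↔ Integrable (fun ω => d ω * h (X ω, Z ω)) ℙ := by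
  rw [← integrable_weightedLaw_iff hX hZ hc hc0 hh, hcd,
    integrable_weightedLaw_iff hX hZ hd hd0 hh]

lemma weightedLaw_prod (hX : Measurable X) (hZ : AEMeasurable Z ℙ) {c : Ω → ℝ}
    (hc : Measurable c) (hci : Integrable c ℙ) (hc0 : 0 ≤ c) {s : Set 𝓧} {t : Set 𝓨}
    (hs : MeasurableSet s) (ht : MeasurableSet t) :
    weightedLaw ℙ X Z c (s ×ˢ t)
      = ENNReal.ofReal (∫ ω in X ⁻¹' s, c ω * t.indicator 1 (Z ω) ∂ℙ) := by
  have hint : Integrable (fun ω => c ω * t.indicator 1 (Z ω)) (ℙ.restrict (X ⁻¹' s)) :=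
    hci.restrict.mul_bdd
      ((measurable_one.indicator ht).comp_aemeasurable hZ).aestronglyMeasurable.restrict
      (ae_of_all _ fun ω => abs_indicator_one_le_one t (Z ω))
  rw [← lintegral_indicator_one (hs.prod ht),
    lintegral_weightedLaw hX hZ hc (measurable_one.indicator (hs.prod ht)),
    ofReal_integral_eq_lintegral_ofReal hint (ae_of_all _ fun ω =>
      mul_nonneg (hc0 ω) (Set.indicator_nonneg (fun _ _ => zero_le_one) _)),
    ← lintegral_indicator (hX hs)]
  congr with ω
  by_cases hXs : X ω ∈ s <;> by_cases hZt : Z ω ∈ t <;> simp [hXs, hZt, Set.indicator]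

lemma weightedLaw_eq_of_forall_setIntegral_eq (hX : Measurable X) (hZ : AEMeasurable Z ℙ)
    {c d : Ω → ℝ} (hc : Measurable c) (hd : Measurable d) (hci : Integrable c ℙ)
    (hdi : Integrable d ℙ) (hc0 : 0 ≤ c) (hd0 : 0 ≤ d)
    (h : ∀ f : 𝓨 → ℝ, Measurable f → (∃ C, ∀ y, |f y| ≤ C) → ∀ B : Set 𝓧, MeasurableSet B →
      ∫ ω in X ⁻¹' B, c ω * f (Z ω) ∂ℙ = ∫ ω in X ⁻¹' B, d ω * f (Z ω) ∂ℙ) :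
    weightedLaw ℙ X Z c = weightedLaw ℙ X Z d := by
  have := isFiniteMeasure_weightedLaw (X := X) (Z := Z) hci
  refine Measure.ext_prod fun {s t} hs ht => ?_
  rw [weightedLaw_prod hX hZ hc hci hc0 hs ht, weightedLaw_prod hX hZ hd hdi hd0 hs ht,
    h _ (measurable_one.indicator ht) ⟨1, abs_indicator_one_le_one t⟩ s hs]

lemma weightedLaw_add (hX : Measurable X) (hZ : AEMeasurable Z ℙ) {c d : Ω → ℝ}
    (hc0 : 0 ≤ c) (hd0 : 0 ≤ d) (hd : Measurable d) :
    weightedLaw ℙ X Z (fun ω => c ω + d ω) = weightedLaw ℙ X Z c + weightedLaw ℙ X Z d := by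
  simp only [weightedLaw]
  rw [← AEMeasurable.map_add₀ (aemeasurable_prodMk_withDensity hX hZ _)
      (aemeasurable_prodMk_withDensity hX hZ _),
    ← withDensity_add_right _ hd.ennreal_ofReal]
  simp only [ENNReal.ofReal_add (hc0 _) (hd0 _)]
  rfl

lemma weightedLaw_sub_congr (hX : Measurable X) (hZ : AEMeasurable Z ℙ) {a c d : Ω → ℝ}
    (hc : Measurable c) (hd : Measurable d) (hci : Integrable c ℙ) (hc0 : 0 ≤ c) (hd0 : 0 ≤ d)
    (hca : c ≤ a) (hda : d ≤ a) (hcd : weightedLaw ℙ X Z c = weightedLaw ℙ X Z d) :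
    weightedLaw ℙ X Z (fun ω => a ω - c ω) = weightedLaw ℙ X Z (fun ω => a ω - d ω) := by
  have := isFiniteMeasure_weightedLaw (X := X) (Z := Z) hci
  have decomp (e : Ω → ℝ) (he : Measurable e) (he0 : 0 ≤ e) (hea : e ≤ a) :
      weightedLaw ℙ X Z (fun ω => a ω - e ω) + weightedLaw ℙ X Z e = weightedLaw ℙ X Z a := by
    rw [← weightedLaw_add hX hZ (fun ω => sub_nonneg.2 (hea ω)) he0 he]
    simp only [sub_add_cancel]
  ext s hs
  rw [← ENNReal.add_left_inj (measure_ne_top (weightedLaw ℙ X Z c) s)]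
  nth_rewrite 2 [hcd]
  rw [← Measure.add_apply, ← Measure.add_apply, decomp c hc hc0 hca, decomp d hd hd0 hda]

lemma weightedLaw_mul_one_sub_congr (hX : Measurable X) (hZ : AEMeasurable Z ℙ)
    {c a b : Ω → ℝ} (hc : Measurable c) (ha : Measurable a) (hb : Measurable b)
    (hci : Integrable c ℙ) (hc0 : 0 ≤ c) (ha01 : ∀ ω, a ω ∈ Set.Icc 0 1)
    (hb01 : ∀ ω, b ω ∈ Set.Icc 0 1)
    (hab : weightedLaw ℙ X Z (fun ω => c ω * a ω) = weightedLaw ℙ X Z (fun ω => c ω * b ω)) :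
    weightedLaw ℙ X Z (fun ω => c ω * (1 - a ω))
      = weightedLaw ℙ X Z (fun ω => c ω * (1 - b ω)) := by
  simpa only [mul_one_sub] using weightedLaw_sub_congr hX hZ (a := c)
    (c := fun ω => c ω * a ω) (d := fun ω => c ω * b ω) (hc.mul ha) (hc.mul hb)
    (hci.mul_bdd ha.aestronglyMeasurable (ae_of_all _ fun ω => by
      rw [Real.norm_of_nonneg (ha01 ω).1]; exact (ha01 ω).2))
    (fun ω => mul_nonneg (hc0 ω) (ha01 ω).1) (fun ω => mul_nonneg (hc0 ω) (hb01 ω).1)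
    (fun ω => mul_le_of_le_one_right (hc0 ω) (ha01 ω).2)
    (fun ω => mul_le_of_le_one_right (hc0 ω) (hb01 ω).2) hab

lemma weightedLaw_mul_comp_congr (hX : Measurable X) (hZ : AEMeasurable Z ℙ) {c d : Ω → ℝ}
    {a : 𝓧 → ℝ} (hc : Measurable c) (hd : Measurable d) (ha : Measurable a)
    (hc0 : 0 ≤ c) (hd0 : 0 ≤ d) (hcd : weightedLaw ℙ X Z c = weightedLaw ℙ X Z d) :
    weightedLaw ℙ X Z (fun ω => c ω * a (X ω)) = weightedLaw ℙ X Z (fun ω => d ω * a (X ω)) := by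
  have key (e : Ω → ℝ) (he : Measurable e) (he0 : 0 ≤ e) (s : Set (𝓧 × 𝓨))
      (hs : MeasurableSet s) : weightedLaw ℙ X Z (fun ω => e ω * a (X ω)) s
        = ∫⁻ p, ENNReal.ofReal (a p.1) * s.indicator 1 p ∂weightedLaw ℙ X Z e := by
    rw [← lintegral_indicator_one hs,
      lintegral_weightedLaw hX hZ (c := fun ω => e ω * a (X ω)) (he.mul (ha.comp hX))
        (measurable_one.indicator hs),
      lintegral_weightedLaw hX hZ he (g := fun p => ENNReal.ofReal (a p.1) * s.indicator 1 p)
        ((ha.comp measurable_fst).ennreal_ofReal.mul (measurable_one.indicator hs))]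
    simp only [ENNReal.ofReal_mul (he0 _), mul_assoc]
  ext s hs
  rw [key c hc hc0 s hs, key d hd hd0 s hs, hcd]

lemma weightedLaw_ipw_eq [IsFiniteMeasure ℙ] (hX : Measurable X) (hZ : AEMeasurable Z ℙ)
    {G A : Ω → ℝ} {e s π : 𝓧 → ℝ} (hG : Measurable G) (hA : Measurable A) (he : Measurable e)
    (hs : Measurable s) (hπ : Measurable π) (hG01 : ∀ ω, G ω ∈ Set.Icc 0 1) (hA0 : 0 ≤ A)
    (he0 : ∀ x, 0 < e x) (hs01 : ∀ x, s x ∈ Set.Ioc 0 1)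
    (hunconf : weightedLaw ℙ X Z (fun ω => G ω * A ω) = weightedLaw ℙ X Z (fun ω => G ω * e (X ω)))
    (htrans : weightedLaw ℙ X Z G = weightedLaw ℙ X Z (fun ω => s (X ω))) :
    weightedLaw ℙ X Z (fun ω => G ω * A ω * (π (X ω) * (1 - s (X ω)) / (s (X ω) * e (X ω))))
      = weightedLaw ℙ X Z (fun ω => (1 - G ω) * π (X ω)) := by
  have hsX : Measurable fun ω => s (X ω) := hs.comp hX
  have htrans_compl : weightedLaw ℙ X Z (fun ω => 1 - G ω)
      = weightedLaw ℙ X Z (fun ω => 1 - s (X ω)) :=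
    weightedLaw_sub_congr hX hZ hG hsX (integrable_of_mem_Icc hG.aestronglyMeasurable hG01)
      (fun ω => (hG01 ω).1) (fun ω => (hs01 (X ω)).1.le) (fun ω => (hG01 ω).2)
      (fun ω => (hs01 (X ω)).2) htrans
  calc weightedLaw ℙ X Z (fun ω => G ω * A ω * (π (X ω) * (1 - s (X ω)) / (s (X ω) * e (X ω))))
      = weightedLaw ℙ X Z
          (fun ω => G ω * e (X ω) * (π (X ω) * (1 - s (X ω)) / (s (X ω) * e (X ω)))) :=
        weightedLaw_mul_comp_congr hX hZ (a := fun x => π x * (1 - s x) / (s x * e x))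
          (hG.mul hA) (hG.mul (he.comp hX)) (by fun_prop)
          (fun ω => mul_nonneg (hG01 ω).1 (hA0 ω))
          (fun ω => mul_nonneg (hG01 ω).1 (he0 (X ω)).le) hunconf
    _ = weightedLaw ℙ X Z (fun ω => G ω * (π (X ω) * (1 - s (X ω)) / s (X ω))) := by
        refine congrArg _ (funext fun ω => ?_)
        field_simp [(he0 (X ω)).ne']
    _ = weightedLaw ℙ X Z (fun ω => s (X ω) * (π (X ω) * (1 - s (X ω)) / s (X ω))) :=
        weightedLaw_mul_comp_congr hX hZ (a := fun x => π x * (1 - s x) / s x) hG hsX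
          (by fun_prop) (fun ω => (hG01 ω).1) (fun ω => (hs01 (X ω)).1.le) htrans
    _ = weightedLaw ℙ X Z (fun ω => (1 - s (X ω)) * π (X ω)) := by
        refine congrArg _ (funext fun ω => ?_)
        field_simp [(hs01 (X ω)).1.ne']
    _ = weightedLaw ℙ X Z (fun ω => (1 - G ω) * π (X ω)) :=
        (weightedLaw_mul_comp_congr hX hZ (c := fun ω => 1 - G ω) (d := fun ω => 1 - s (X ω))
          (by fun_prop) (by fun_prop) hπ (fun ω => sub_nonneg.2 (hG01 ω).2)
          (fun ω => sub_nonneg.2 (hs01 (X ω)).2) htrans_compl).symm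

lemma integrable_and_integral_ipw_arm_eq [IsFiniteMeasure ℙ] (hX : Measurable X)
    (hZ : AEMeasurable Z ℙ)
    {G A : Ω → ℝ} {e s π : 𝓧 → ℝ} (hG : Measurable G) (hA : Measurable A) (he : Measurable e)
    (hs : Measurable s) (hπ : Measurable π) (hG01 : ∀ ω, G ω ∈ Set.Icc 0 1) (hA0 : 0 ≤ A)
    (he0 : ∀ x, 0 < e x) (hs01 : ∀ x, s x ∈ Set.Ioc 0 1) (hπ01 : ∀ x, π x ∈ Set.Icc 0 1)
    (hunconf : weightedLaw ℙ X Z (fun ω => G ω * A ω) = weightedLaw ℙ X Z (fun ω => G ω * e (X ω)))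
    (htrans : weightedLaw ℙ X Z G = weightedLaw ℙ X Z (fun ω => s (X ω)))
    {h : 𝓧 × 𝓨 → ℝ} (hh : Measurable h) (hint : Integrable (fun ω => h (X ω, Z ω)) ℙ) :
    Integrable (fun ω => G ω * A ω * (π (X ω) * (1 - s (X ω)) / (s (X ω) * e (X ω)))
        * h (X ω, Z ω)) ℙ
      ∧ ∫ ω, G ω * A ω * (π (X ω) * (1 - s (X ω)) / (s (X ω) * e (X ω))) * h (X ω, Z ω) ∂ℙ
        = ∫ ω, (1 - G ω) * π (X ω) * h (X ω, Z ω) ∂ℙ := by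
  have hlaw := weightedLaw_ipw_eq hX hZ hG hA he hs hπ hG01 hA0 he0 hs01 hunconf htrans
  have hw : 0 ≤ fun ω => G ω * A ω * (π (X ω) * (1 - s (X ω)) / (s (X ω) * e (X ω))) :=
    fun ω => mul_nonneg (mul_nonneg (hG01 ω).1 (hA0 ω))
      (div_nonneg (mul_nonneg (hπ01 _).1 (sub_nonneg.2 (hs01 _).2)) (mul_pos (hs01 _).1 (he0 _)).le)
  have hπG01 : ∀ ω, (1 - G ω) * π (X ω) ∈ Set.Icc 0 1 := fun ω =>
    unitInterval.mul_mem (Set.Icc.mem_iff_one_sub_mem.mp (hG01 ω)) (hπ01 _)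
  have hπG : Measurable fun ω => (1 - G ω) * π (X ω) := by fun_prop
  exact ⟨(integrable_mul_iff_of_weightedLaw_eq hX hZ (by fun_prop) hπG hw (fun ω => (hπG01 ω).1)
      hlaw hh).2 (hint.mul_of_mem_Icc hπG.aestronglyMeasurable hπG01),
    integral_mul_eq_of_weightedLaw_eq hX hZ (by fun_prop) hπG hw (fun ω => (hπG01 ω).1) hlaw hh⟩

lemma integral_target_eq_integral_ipw [IsFiniteMeasure ℙ] (hX : Measurable X)
    {G A Y1 Y0 : Ω → ℝ} {e s π : 𝓧 → ℝ} (hG : Measurable G) (hA : Measurable A)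
    (he : Measurable e) (hs : Measurable s) (hπ : Measurable π)
    (hY1 : Integrable Y1 ℙ) (hY0 : Integrable Y0 ℙ) (hG01 : ∀ ω, G ω ∈ Set.Icc 0 1)
    (hA01 : ∀ ω, A ω ∈ Set.Icc 0 1) (he01 : ∀ x, e x ∈ Set.Ioo 0 1)
    (hs01 : ∀ x, s x ∈ Set.Ioc 0 1) (hπ01 : ∀ x, π x ∈ Set.Icc 0 1)
    (hunconf : weightedLaw ℙ X (fun ω => (Y1 ω, Y0 ω)) (fun ω => G ω * A ω)
      = weightedLaw ℙ X (fun ω => (Y1 ω, Y0 ω)) (fun ω => G ω * e (X ω)))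
    (htrans : weightedLaw ℙ X (fun ω => (Y1 ω, Y0 ω)) G
      = weightedLaw ℙ X (fun ω => (Y1 ω, Y0 ω)) (fun ω => s (X ω))) :
    ∫ ω, (1 - G ω) * (π (X ω) * Y1 ω + (1 - π (X ω)) * Y0 ω) ∂ℙ
      = ∫ ω, G ω * ((1 - s (X ω)) / s (X ω))
          * (π (X ω) * A ω * Y1 ω / e (X ω)
              + (1 - π (X ω)) * (1 - A ω) * Y0 ω / (1 - e (X ω))) ∂ℙ := by
  have hZ : AEMeasurable (fun ω => (Y1 ω, Y0 ω)) ℙ := hY1.aemeasurable.prodMk hY0.aemeasurable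
  have hunconf_compl := weightedLaw_mul_one_sub_congr hX hZ hG hA (he.comp hX)
    (integrable_of_mem_Icc hG.aestronglyMeasurable hG01) (fun ω => (hG01 ω).1) hA01
    (fun ω => Set.Ioo_subset_Icc_self (he01 (X ω))) hunconf
  obtain ⟨htreated_int, htreated⟩ := integrable_and_integral_ipw_arm_eq hX hZ hG hA he hs hπ
    hG01 (fun ω => (hA01 ω).1) (fun x => (he01 x).1) hs01 hπ01 hunconf htrans
    (h := fun p => p.2.1) (by fun_prop) hY1
  obtain ⟨hcontrol_int, hcontrol⟩ := integrable_and_integral_ipw_arm_eq hX hZ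
    (A := fun ω => 1 - A ω) (e := fun x => 1 - e x) (π := fun x => 1 - π x) hG
    (by fun_prop) (by fun_prop) hs (by fun_prop) hG01 (fun ω => sub_nonneg.2 (hA01 ω).2)
    (fun x => sub_pos.2 (he01 x).2) hs01
    (fun x => Set.Icc.mem_iff_one_sub_mem.mp (hπ01 x)) hunconf_compl htrans
    (h := fun p => p.2.2) (by fun_prop) hY0
  have hπG01 : ∀ ω, (1 - G ω) * π (X ω) ∈ Set.Icc 0 1 := fun ω =>
    unitInterval.mul_mem (Set.Icc.mem_iff_one_sub_mem.mp (hG01 ω)) (hπ01 _)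
  have hπG01' : ∀ ω, (1 - G ω) * (1 - π (X ω)) ∈ Set.Icc 0 1 := fun ω =>
    unitInterval.mul_mem (Set.Icc.mem_iff_one_sub_mem.mp (hG01 ω))
      (Set.Icc.mem_iff_one_sub_mem.mp (hπ01 _))
  calc ∫ ω, (1 - G ω) * (π (X ω) * Y1 ω + (1 - π (X ω)) * Y0 ω) ∂ℙ
      = ∫ ω, (1 - G ω) * π (X ω) * Y1 ω ∂ℙ + ∫ ω, (1 - G ω) * (1 - π (X ω)) * Y0 ω ∂ℙ := by
        rw [← integral_add (hY1.mul_of_mem_Icc (by fun_prop) hπG01)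
          (hY0.mul_of_mem_Icc (by fun_prop) hπG01')]
        exact integral_congr_ae (ae_of_all _ fun ω => by ring)
    _ = _ := by
        rw [← htreated, ← hcontrol, ← integral_add htreated_int hcontrol_int]
        exact integral_congr_ae (ae_of_all _ fun ω => by simp only [div_eq_mul_inv, mul_inv]; ring)

end WeightedLaw

theorem reward_ipw_identity_general
    {Ω : Type*} [MeasurableSpace Ω] (ℙ : Measure Ω) [IsProbabilityMeasure ℙ]
    {𝓧 : Type*} [MeasurableSpace 𝓧]
    (X : Ω → 𝓧) (A G Y1 Y0 : Ω → ℝ)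
    (hX : Measurable X) (hA : Measurable A) (hG : Measurable G)
    (hY1 : Integrable Y1 ℙ) (hY0 : Integrable Y0 ℙ)
    (hAbin : ∀ ω, A ω = 0 ∨ A ω = 1) (hGbin : ∀ ω, G ω = 0 ∨ G ω = 1)
    -- consistency: observed outcome
    (Y : Ω → ℝ) (hYdef : ∀ ω, Y ω = A ω * Y1 ω + (1 - A ω) * Y0 ω)
    (q : ℝ)
    (e1 s : 𝓧 → ℝ)
    (he1meas : Measurable e1) (hsmeas : Measurable s)
    -- overlap: 0 < e₁(X) < 1
    (hover : ∀ x, 0 < e1 x ∧ e1 x < 1)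
    -- positivity of the sampling score: 0 < s(X) < 1
    (hspos : ∀ x, 0 < s x ∧ s x < 1)
    -- unconfoundedness: (Y(1), Y(0)) ⟂ A | X, G=1
    (hunconf : ∀ f : ℝ × ℝ → ℝ, Measurable f → (∃ C, ∀ p, |f p| ≤ C) →
      ∀ B : Set 𝓧, MeasurableSet B →
      ∫ ω in X ⁻¹' B, G ω * A ω * f (Y1 ω, Y0 ω) ∂ℙ
        = ∫ ω in X ⁻¹' B, G ω * e1 (X ω) * f (Y1 ω, Y0 ω) ∂ℙ)
    -- transportability: (Y(1), Y(0)) ⟂ G | X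
    (htrans : ∀ f : ℝ × ℝ → ℝ, Measurable f → (∃ C, ∀ p, |f p| ≤ C) →
      ∀ B : Set 𝓧, MeasurableSet B →
      ∫ ω in X ⁻¹' B, G ω * f (Y1 ω, Y0 ω) ∂ℙ
        = ∫ ω in X ⁻¹' B, s (X ω) * f (Y1 ω, Y0 ω) ∂ℙ)
    -- a policy
    (π : 𝓧 → ℝ) (hπmeas : Measurable π) (hπbin : ∀ x, π x = 0 ∨ π x = 1) :
    (1 / (1 - q)) * ∫ ω, (1 - G ω) * (π (X ω) * Y1 ω + (1 - π (X ω)) * Y0 ω) ∂ℙ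
      = ∫ ω, (G ω / (1 - q)) * ((1 - s (X ω)) / s (X ω))
          * (π (X ω) * A ω * Y ω / e1 (X ω)
              + (1 - π (X ω)) * (1 - A ω) * Y ω / (1 - e1 (X ω))) ∂ℙ := by
  have hZ : AEMeasurable (fun ω => (Y1 ω, Y0 ω)) ℙ := hY1.aemeasurable.prodMk hY0.aemeasurable
  have hG01 : ∀ ω, G ω ∈ Set.Icc 0 1 := fun ω => by rcases hGbin ω with h | h <;> simp [h]
  have hA01 : ∀ ω, A ω ∈ Set.Icc 0 1 := fun ω => by rcases hAbin ω with h | h <;> simp [h]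
  have hπ01 : ∀ x, π x ∈ Set.Icc 0 1 := fun x => by rcases hπbin x with h | h <;> simp [h]
  have hs01 : ∀ x, s x ∈ Set.Ioc 0 1 := fun x => ⟨(hspos x).1, (hspos x).2.le⟩
  have hGA01 : ∀ ω, G ω * A ω ∈ Set.Icc 0 1 := fun ω => unitInterval.mul_mem (hG01 ω) (hA01 ω)
  have hGe01 : ∀ ω, G ω * e1 (X ω) ∈ Set.Icc 0 1 := fun ω =>
    unitInterval.mul_mem (hG01 ω) ⟨(hover (X ω)).1.le, (hover (X ω)).2.le⟩
  have hGA := weightedLaw_eq_of_forall_setIntegral_eq hX hZ (by fun_prop) (by fun_prop)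
    (integrable_of_mem_Icc (by fun_prop) hGA01) (integrable_of_mem_Icc (by fun_prop) hGe01)
    (fun ω => (hGA01 ω).1) (fun ω => (hGe01 ω).1) hunconf
  have hGs := weightedLaw_eq_of_forall_setIntegral_eq hX hZ hG (hsmeas.comp hX)
    (integrable_of_mem_Icc (by fun_prop) hG01)
    (integrable_of_mem_Icc (hsmeas.comp hX).aestronglyMeasurable
      fun ω => Set.Ioc_subset_Icc_self (hs01 (X ω)))
    (fun ω => (hG01 ω).1) (fun ω => (hs01 (X ω)).1.le) htrans
  rw [integral_target_eq_integral_ipw hX hG hA he1meas hsmeas hπmeas hY1 hY0 hG01 hA01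
    hover hs01 hπ01 hGA hGs, ← integral_const_mul]
  refine integral_congr_ae (ae_of_all _ fun ω => ?_)
  rcases hAbin ω with h | h <;> simp only [hYdef ω, h] <;> ring

/-- Under unconfoundedness, overlap and transportability, the target-domain
reward satisfies the inverse-probability-weighting identity
`R(π) = E[(G/(1−q))·((1−s(X))/s(X))·{π(X)AY/e₁(X) + (1−π(X))(1−A)Y/(1−e₁(X))}]`. -/
theorem reward_ipw_identity
    {Ω : Type*} [MeasurableSpace Ω] (ℙ : Measure Ω) [IsProbabilityMeasure ℙ]
    {𝓧 : Type*} [MeasurableSpace 𝓧]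
    (X : Ω → 𝓧) (A G Y1 Y0 : Ω → ℝ)
    (hX : Measurable X) (hA : Measurable A) (hG : Measurable G)
    (hY1 : Integrable Y1 ℙ) (hY0 : Integrable Y0 ℙ)
    (hAbin : ∀ ω, A ω = 0 ∨ A ω = 1) (hGbin : ∀ ω, G ω = 0 ∨ G ω = 1)
    -- consistency: observed outcome
    (Y : Ω → ℝ) (hYdef : ∀ ω, Y ω = A ω * Y1 ω + (1 - A ω) * Y0 ω)
    (q : ℝ) (hq : q = ∫ ω, G ω ∂ℙ) (hq0 : 0 < q) (hq1 : q < 1)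
    (e1 s μ1 μ0 : 𝓧 → ℝ)
    (he1meas : Measurable e1) (hsmeas : Measurable s)
    (hμ1meas : Measurable μ1) (hμ0meas : Measurable μ0)
    -- overlap: 0 < e₁(X) < 1
    (hover : ∀ x, 0 < e1 x ∧ e1 x < 1)
    -- positivity of the sampling score: 0 < s(X) < 1
    (hspos : ∀ x, 0 < s x ∧ s x < 1)
    -- e₁ is a version of P(A=1 | X, G=1)
    (he1ver : ∀ B : Set 𝓧, MeasurableSet B →
      ∫ ω in X ⁻¹' B, G ω * A ω ∂ℙ = ∫ ω in X ⁻¹' B, G ω * e1 (X ω) ∂ℙ)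
    -- s is a version of P(G=1 | X)
    (hsver : ∀ B : Set 𝓧, MeasurableSet B →
      ∫ ω in X ⁻¹' B, G ω ∂ℙ = ∫ ω in X ⁻¹' B, s (X ω) ∂ℙ)
    -- μ₁ is a version of E[Y | X, A=1, G=1]
    (hμ1ver : ∀ B : Set 𝓧, MeasurableSet B →
      ∫ ω in X ⁻¹' B, G ω * A ω * Y ω ∂ℙ = ∫ ω in X ⁻¹' B, G ω * A ω * μ1 (X ω) ∂ℙ)
    -- μ₀ is a version of E[Y | X, A=0, G=1]
    (hμ0ver : ∀ B : Set 𝓧, MeasurableSet B →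
      ∫ ω in X ⁻¹' B, G ω * (1 - A ω) * Y ω ∂ℙ
        = ∫ ω in X ⁻¹' B, G ω * (1 - A ω) * μ0 (X ω) ∂ℙ)
    -- unconfoundedness: (Y(1), Y(0)) ⟂ A | X, G=1
    (hunconf : ∀ f : ℝ × ℝ → ℝ, Measurable f → (∃ C, ∀ p, |f p| ≤ C) →
      ∀ B : Set 𝓧, MeasurableSet B →
      ∫ ω in X ⁻¹' B, G ω * A ω * f (Y1 ω, Y0 ω) ∂ℙ
        = ∫ ω in X ⁻¹' B, G ω * e1 (X ω) * f (Y1 ω, Y0 ω) ∂ℙ)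
    -- transportability: (Y(1), Y(0)) ⟂ G | X
    (htrans : ∀ f : ℝ × ℝ → ℝ, Measurable f → (∃ C, ∀ p, |f p| ≤ C) →
      ∀ B : Set 𝓧, MeasurableSet B →
      ∫ ω in X ⁻¹' B, G ω * f (Y1 ω, Y0 ω) ∂ℙ
        = ∫ ω in X ⁻¹' B, s (X ω) * f (Y1 ω, Y0 ω) ∂ℙ)
    -- a policy
    (π : 𝓧 → ℝ) (hπmeas : Measurable π) (hπbin : ∀ x, π x = 0 ∨ π x = 1) :
    (1 / (1 - q)) * ∫ ω, (1 - G ω) * (π (X ω) * Y1 ω + (1 - π (X ω)) * Y0 ω) ∂ℙ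
      = ∫ ω, (G ω / (1 - q)) * ((1 - s (X ω)) / s (X ω))
          * (π (X ω) * A ω * Y ω / e1 (X ω)
              + (1 - π (X ω)) * (1 - A ω) * Y ω / (1 - e1 (X ω))) ∂ℙ :=
  reward_ipw_identity_general ℙ X A G Y1 Y0 hX hA hG hY1 hY0 hAbin hGbin Y hYdef q e1 s he1meas
    hsmeas hover hspos hunconf htrans π hπmeas hπbin
end
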